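/- arXiv:2007.16016 — 10 statements merged into one kernel-verified Lean document; each statement's English description precedes it below -/
import Mathlib

section
/- In F_2[x], the polynomial A_1 is odd (has no root in F_2) and if an odd polynomial over F_2 is perfect (equals the sum of its divisors), then it is a square. Precisely: if A ∈ F_2[x] satisfies σ(A) = A, where σ(A) denotes the sum of all monic divisors of A, and A(0) ≠ 0 and A(1) ≠ 0, then A is the square of some polynomial. -/
open Polynomial

/-- The sum of all monic divisors of `A` in `F_2[x]`. -/
noncomputable def sigmaF2 (A : Polynomial (ZMod 2)) : Polynomial (ZMod 2) :=
  ∑ᶠ d ∈ {d : Polynomial (ZMod 2) | d.Monic ∧ d ∣ A}, d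

lemma zmod2_eq_one {a : ZMod 2} (h : a ≠ 0) : a = 1 := by
  revert h; revert a; decide

lemma monic_of_ne_zero {p : Polynomial (ZMod 2)} (hp : p ≠ 0) : p.Monic :=
  zmod2_eq_one (Polynomial.leadingCoeff_ne_zero.mpr hp)

theorem odd_perfect_is_square (A : Polynomial (ZMod 2))
    (hperf : sigmaF2 A = A) (h0 : A.eval 0 ≠ 0) (h1 : A.eval 1 ≠ 0) :
    ∃ B : Polynomial (ZMod 2), A = B ^ 2 := by
  by_contra hns
  push_neg at hns
  have hA0 : A ≠ 0 := fun h => h0 (by simp [h])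
  have hfin : {d : Polynomial (ZMod 2) | d.Monic ∧ d ∣ A}.Finite := by
    have : Finite {g : Polynomial (ZMod 2) // g.Monic ∧ g ∣ A} :=
      @Finite.of_fintype _ (Polynomial.fintypeSubtypeMonicDvd A hA0)
    exact Set.finite_coe_iff.mp this
  have hsum : sigmaF2 A = ∑ d ∈ hfin.toFinset, d :=
    finsum_mem_eq_finite_toFinset_sum _ hfin
  have hmem : ∀ d : Polynomial (ZMod 2), d ∈ hfin.toFinset ↔ d.Monic ∧ d ∣ A := by
    intro d
    rw [Set.Finite.mem_toFinset, Set.mem_setOf_eq]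
  -- every divisor evaluates to 1 at 0
  have hev : ∀ d ∈ hfin.toFinset, Polynomial.eval 0 d = 1 := by
    intro d hd
    rw [hmem] at hd
    obtain ⟨c, hc⟩ := hd.2
    apply zmod2_eq_one
    intro hd0
    apply h0
    rw [hc, Polynomial.eval_mul, hd0, zero_mul]
  -- key facts about the involution d ↦ A / d
  have key : ∀ a : Polynomial (ZMod 2), a ∈ hfin.toFinset →
      a * (A / a) = A ∧ A / a ≠ 0 := by
    intro a ha
    rw [hmem] at ha
    have ha0 : a ≠ 0 := ha.1.ne_zero
    have hmul : a * (A / a) = A := EuclideanDomain.mul_div_cancel' ha0 ha.2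
    refine ⟨hmul, fun h => ?_⟩
    rw [h, mul_zero] at hmul
    exact hA0 hmul.symm
  -- the involution has no fixed point since A is not a square
  have hzero : ∑ _d ∈ hfin.toFinset, (1 : ZMod 2) = 0 := by
    refine Finset.sum_involution (fun d _ => A / d) (fun a ha => by decide)
      ?_ ?_ ?_
    · intro a ha _ hfix
      obtain ⟨hmul, _⟩ := key a ha
      have hfix' : A / a = a := hfix
      exact hns a (by rw [← hmul, hfix', sq])
    · intro a ha
      obtain ⟨hmul, hq0⟩ := key a ha
      show A / a ∈ hfin.toFinset
      rw [hmem]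
      refine ⟨monic_of_ne_zero hq0, ⟨a, ?_⟩⟩
      rw [mul_comm] at hmul
      exact hmul.symm
    · intro a ha
      obtain ⟨hmul, hq0⟩ := key a ha
      show A / (A / a) = a
      nth_rewrite 1 [← hmul]
      exact mul_div_cancel_right₀ a hq0
  have : A.eval 0 = 0 := by
    conv_lhs => rw [← hperf, hsum]
    rw [Polynomial.eval_finset_sum, Finset.sum_congr rfl hev]
    exact hzero
  exact h0 this
end

section
/- In F_2[x], for positive integers a, b, c, the identity 1 + (x^2+x+1)^a = x^b (x+1)^c holds if and only if a = b = c = 2^r for some natural number r. -/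
open Polynomial Finset

lemma key_id (r : ℕ) :
    ((X ^ 2 + X + 1 : Polynomial (ZMod 2)) ^ 2 ^ r + 1) = X ^ 2 ^ r * (X + 1) ^ 2 ^ r := by
  have h2 : (2 : Polynomial (ZMod 2)) = 0 := CharTwo.two_eq_zero
  have h1 : ((X + 1 : Polynomial (ZMod 2)) ^ 2 ^ r) = X ^ 2 ^ r + 1 := by
    rw [add_pow_char_pow, one_pow]
  have h3 : ((X ^ 2 + X + 1 : Polynomial (ZMod 2)) ^ 2 ^ r)
      = (X ^ 2) ^ 2 ^ r + X ^ 2 ^ r + 1 := by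
    rw [add_pow_char_pow, add_pow_char_pow, one_pow]
  have h4 : ((X : Polynomial (ZMod 2)) ^ 2) ^ 2 ^ r = (X ^ 2 ^ r) ^ 2 := by
    rw [← pow_mul, ← pow_mul, Nat.mul_comm]
  rw [h1, h3, h4]
  linear_combination h2

lemma Xp1_eq : (X + 1 : Polynomial (ZMod 2)) = X - C 1 := by
  rw [sub_eq_add_neg, CharTwo.neg_eq, map_one]

lemma rm0 (b c : ℕ) :
    rootMultiplicity 0 ((X : Polynomial (ZMod 2)) ^ b * (X + 1) ^ c) = b := by
  have hx : ((X : Polynomial (ZMod 2)) ^ b) ≠ 0 := pow_ne_zero _ X_ne_zero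
  have hy : ((X + 1 : Polynomial (ZMod 2)) ^ c) ≠ 0 := by
    rw [Xp1_eq]; exact pow_ne_zero _ (X_sub_C_ne_zero 1)
  rw [rootMultiplicity_mul (mul_ne_zero hx hy)]
  have e1 : rootMultiplicity (0 : ZMod 2) (X ^ b) = b := by
    have := rootMultiplicity_X_sub_C_pow (R := ZMod 2) 0 b
    simpa using this
  have e2 : rootMultiplicity (0 : ZMod 2) ((X + 1) ^ c) = 0 := by
    apply rootMultiplicity_eq_zero
    simp [IsRoot]
  rw [e1, e2, add_zero]

lemma rm1 (b c : ℕ) :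
    rootMultiplicity 1 ((X : Polynomial (ZMod 2)) ^ b * (X + 1) ^ c) = c := by
  have hx : ((X : Polynomial (ZMod 2)) ^ b) ≠ 0 := pow_ne_zero _ X_ne_zero
  have hy : ((X + 1 : Polynomial (ZMod 2)) ^ c) ≠ 0 := by
    rw [Xp1_eq]; exact pow_ne_zero _ (X_sub_C_ne_zero 1)
  rw [rootMultiplicity_mul (mul_ne_zero hx hy)]
  have e1 : rootMultiplicity (1 : ZMod 2) (X ^ b) = 0 := by
    apply rootMultiplicity_eq_zero
    simp [IsRoot]
  have e2 : rootMultiplicity (1 : ZMod 2) ((X + 1) ^ c) = c := by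
    rw [Xp1_eq]; exact rootMultiplicity_X_sub_C_pow 1 c
  rw [e1, e2, zero_add]

theorem one_add_pow_eq_split (a b c : ℕ) (ha : 0 < a) (hb : 0 < b) (hc : 0 < c) :
    ((1 + (X ^ 2 + X + 1) ^ a : Polynomial (ZMod 2)) = X ^ b * (X + 1) ^ c) ↔
      ∃ r : ℕ, a = 2 ^ r ∧ b = 2 ^ r ∧ c = 2 ^ r := by
  constructor
  · intro h
    obtain ⟨r, m, hm2, rfl⟩ := Nat.exists_eq_pow_mul_and_not_dvd ha.ne' 2 (by norm_num)
    set f : Polynomial (ZMod 2) := X ^ 2 + X + 1 with hf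
    set g : Polynomial (ZMod 2) := f ^ 2 ^ r with hg
    have hfmonic : f.Monic := by
      have : f = X ^ 2 + (X + 1) := by ring
      rw [this]
      apply monic_X_pow_add
      calc degree ((X : Polynomial (ZMod 2)) + 1) ≤ 1 := by
            simpa using degree_linear_le (a := (1 : ZMod 2)) (b := 1)
        _ < 2 := by norm_num
    have hfd : f.natDegree = 2 := by
      have : f = X ^ 2 + (X + 1) := by ring
      rw [this]
      compute_degree!
    have hgmonic : g.Monic := hfmonic.pow _
    have hgd : 0 < g.natDegree := by
      rw [hg, hfmonic.natDegree_pow, hfd]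
      positivity
    set S : Polynomial (ZMod 2) := ∑ i ∈ range m, g ^ i with hS
    have hgeom : S * (g - 1) = g ^ m - 1 := geom_sum_mul g m
    have hkey : g + 1 = X ^ 2 ^ r * (X + 1) ^ 2 ^ r := key_id r
    have hgm : g ^ m = (X ^ 2 + X + 1) ^ (2 ^ r * m) := by rw [hg, hf, ← pow_mul]
    have heq : S * (X ^ 2 ^ r * (X + 1) ^ 2 ^ r) = X ^ b * (X + 1) ^ c := by
      rw [← hkey]
      have : g + 1 = g - 1 := by
        rw [sub_eq_add_neg, CharTwo.neg_eq]
      rw [this, hgeom, hgm, sub_eq_add_neg, CharTwo.neg_eq, ← h]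
      ring
    -- S is coprime to X and X+1
    have hm1 : (m : ZMod 2) = 1 := by
      have hmod : m % 2 = 1 := Nat.two_dvd_ne_zero.mp hm2
      rw [← ZMod.natCast_mod, hmod, Nat.cast_one]
    have hevg : ∀ x : ZMod 2, f.eval x = 1 := by
      intro x
      simp only [hf, eval_add, eval_pow, eval_X, eval_one]
      revert x; decide
    have hevS : ∀ x : ZMod 2, S.eval x = 1 := by
      intro x
      rw [hS, eval_finset_sum]
      have : ∀ i ∈ range m, (g ^ i).eval x = 1 := by
        intro i _
        rw [eval_pow, hg, eval_pow, hevg, one_pow, one_pow]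
      rw [Finset.sum_congr rfl this]
      simpa using hm1
    have hcopX : IsCoprime S (X : Polynomial (ZMod 2)) := by
      rw [isCoprime_comm, (irreducible_X (R := ZMod 2)).coprime_iff_not_dvd]
      intro hdvd
      have : (X - C 0 : Polynomial (ZMod 2)) ∣ S := by simpa using hdvd
      have := dvd_iff_isRoot.mp this
      rw [IsRoot, hevS] at this
      exact one_ne_zero this
    have hcopX1 : IsCoprime S ((X : Polynomial (ZMod 2)) + 1) := by
      rw [isCoprime_comm, Xp1_eq]
      rw [(irreducible_X_sub_C (1 : ZMod 2)).coprime_iff_not_dvd]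
      intro hdvd
      have := dvd_iff_isRoot.mp hdvd
      rw [IsRoot, hevS] at this
      exact one_ne_zero this
    have hcop : IsCoprime S ((X : Polynomial (ZMod 2)) ^ b * (X + 1) ^ c) :=
      (hcopX.pow_right.mul_right hcopX1.pow_right)
    have hSdvd : S ∣ (X : Polynomial (ZMod 2)) ^ b * (X + 1) ^ c :=
      ⟨X ^ 2 ^ r * (X + 1) ^ 2 ^ r, heq.symm⟩
    have hSunit : IsUnit S := hcop.isUnit_of_dvd' dvd_rfl hSdvd
    have hmne : m ≠ 0 := by rintro rfl; exact hm2 (dvd_zero 2)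
    have hSmonic : S.Monic := hgmonic.geom_sum hgd hmne
    have hS1 : S = 1 := hSmonic.eq_one_of_isUnit hSunit
    have hm1' : m = 1 := by
      have h5 : g ^ m - 1 = g - 1 := by rw [← hgeom, hS1, one_mul]
      have h6 : g ^ m = g := by
        have := congrArg (· + (1 : Polynomial (ZMod 2))) h5
        simpa [sub_add_cancel] using this
      have h7 : (g ^ m).natDegree = g.natDegree := by rw [h6]
      rw [natDegree_pow] at h7
      have : m * g.natDegree = 1 * g.natDegree := by rw [h7, one_mul]
      exact Nat.eq_of_mul_eq_mul_right hgd this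
    subst hm1'
    rw [hS1, one_mul] at heq
    refine ⟨r, by omega, ?_, ?_⟩
    · have := congrArg (rootMultiplicity 0) heq
      rw [rm0, rm0] at this; omega
    · have := congrArg (rootMultiplicity 1) heq
      rw [rm1, rm1] at this; omega
  · rintro ⟨r, rfl, rfl, rfl⟩
    rw [add_comm]
    exact key_id r
end

section
/- In F_2[x], for natural numbers a, b, c with b ≥ 1, the identity (x+1)^a + (x^2+x+1)^b = x^c holds if and only if (a = b = 2^r and c = 2b) or (b = c = 2^r and a = 2b) or (b = 2^r and a = c = 3b), for some natural number r. -/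
open Polynomial

private lemma two_zero : (2 : Polynomial (ZMod 2)) = 0 := CharTwo.two_eq_zero

private lemma sq_inj {f g : Polynomial (ZMod 2)} (h : f ^ 2 = g ^ 2) : f = g := by
  have h2 := two_zero
  have h3 : (f - g) ^ 2 = 0 := by linear_combination h + (g^2 - f*g) * h2
  exact sub_eq_zero.mp (pow_eq_zero_iff (n := 2) (by norm_num) |>.mp h3)

private lemma monic_m : (X^2 + X + 1 : Polynomial (ZMod 2)).Monic := by monicity!

private lemma monic_xp1 : ((X:Polynomial (ZMod 2))+1).Monic := by monicity!

private lemma nd_xp1 (n : ℕ) : (((X:Polynomial (ZMod 2))+1)^n).natDegree = n := by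
  have h1 : ((X:Polynomial (ZMod 2))+1).natDegree = 1 := by compute_degree!
  rw [monic_xp1.natDegree_pow, h1, mul_one]

private lemma nd_m_pow (b : ℕ) : ((X^2 + X + 1 : Polynomial (ZMod 2))^b).natDegree = 2*b := by
  have h1 : (X^2 + X + 1 : Polynomial (ZMod 2)).natDegree = 2 := by compute_degree!
  rw [monic_m.natDegree_pow, h1]; ring

private lemma cast_even {n : ℕ} (h : n % 2 = 0) : (n : Polynomial (ZMod 2)) = 0 :=
  (CharP.cast_eq_zero_iff (Polynomial (ZMod 2)) 2 n).2 (by omega)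

private lemma cast_odd {n : ℕ} (h : n % 2 = 1) : (n : Polynomial (ZMod 2)) = 1 := by
  obtain ⟨k, hk⟩ : ∃ k, n = 2*k+1 := ⟨n/2, by omega⟩
  subst hk; push_cast
  linear_combination (k : Polynomial (ZMod 2)) * two_zero

private lemma derivE (a b c : ℕ)
    (hE : (X+1)^a + (X^2+X+1)^b = (X^c : Polynomial (ZMod 2))) :
    (a : Polynomial (ZMod 2)) * (X+1)^(a-1)
      + (b : Polynomial (ZMod 2)) * (X^2+X+1)^(b-1)
      = (c : Polynomial (ZMod 2)) * X^(c-1) := by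
  have hD := congrArg derivative hE
  simp only [derivative_add, derivative_pow, derivative_X_pow, derivative_X, derivative_one,
    mul_one, C_eq_natCast] at hD
  have h2 : ((2:ℕ) : Polynomial (ZMod 2)) = 0 := by exact_mod_cast two_zero
  rw [h2] at hD
  linear_combination hD

private lemma a_pos {a b c : ℕ} (hb : 1 ≤ b)
    (hE : (X+1)^a + (X^2+X+1)^b = (X^c : Polynomial (ZMod 2))) : 1 ≤ a := by
  by_contra h
  have ha : a = 0 := by omega
  subst ha
  have := congrArg (eval 1) hE
  simp at this
  exact absurd this.1 (by decide)

private lemma c_pos {a b c : ℕ} (ha : 1 ≤ a)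
    (hE : (X+1)^a + (X^2+X+1)^b = (X^c : Polynomial (ZMod 2))) : 1 ≤ c := by
  by_contra h
  have hc : c = 0 := by omega
  subst hc
  have := congrArg (eval 0) hE
  simp at this

private lemma pow2_of :
    ∀ n : ℕ, 1 ≤ n → ((X:Polynomial (ZMod 2))+1)^n = X^n + 1 → ∃ e, n = 2^e := by
  intro n
  induction n using Nat.strong_induction_on with
  | _ n IH =>
    intro hn h
    rcases Nat.even_or_odd n with he | ho
    · obtain ⟨k, hk⟩ := he
      subst hk
      have hk1 : 1 ≤ k := by omega
      have hsq : (((X:Polynomial (ZMod 2))+1)^k)^2 = (X^k+1)^2 := by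
        rw [← pow_mul]
        rw [show k*2 = k+k by ring, h]
        linear_combination -(X:Polynomial (ZMod 2))^k * two_zero
      obtain ⟨e, he⟩ := IH k (by omega) hk1 (sq_inj hsq)
      exact ⟨e+1, by subst he; ring⟩
    · have hn1 : n % 2 = 1 := Nat.odd_iff.mp ho
      by_cases h1 : n = 1
      · exact ⟨0, by omega⟩
      · exfalso
        have hD := congrArg derivative h
        simp only [derivative_add, derivative_pow, derivative_X_pow, derivative_X,
          derivative_one, mul_one, C_eq_natCast, add_zero] at hD
        have hc : ((n:ℕ) : Polynomial (ZMod 2)) = 1 := cast_odd hn1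
        rw [hc, one_mul, one_mul] at hD
        have := congrArg (eval 1) hD
        simp at this
        omega

private lemma mod3_eq (a b c : ℕ) (hb : 1 ≤ b)
    (hE : (X+1)^a + (X^2+X+1)^b = (X^c : Polynomial (ZMod 2))) : (2*a) % 3 = c % 3 := by
  set A : Matrix (Fin 2) (Fin 2) (ZMod 2) := !![0,1;1,1] with hA
  have h := congrArg (aeval A) hE
  simp only [map_add, map_pow, aeval_X, map_one] at h
  have hm0 : A^2 + A + 1 = 0 := by decide
  rw [hm0, zero_pow (by omega), add_zero] at h
  have h1 : A + 1 = A^2 := by decide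
  rw [h1, ← pow_mul] at h
  have h3 : A^3 = 1 := by decide
  have key : ∀ n : ℕ, A^n = A^(n % 3) := by
    intro n
    conv_lhs => rw [show n = 3*(n/3) + n%3 by omega]
    rw [pow_add, pow_mul, h3, one_pow, one_mul]
  rw [key (2*a), key c] at h
  have inj : ∀ i j : Fin 3, A^(i:ℕ) = A^(j:ℕ) → i = j := by decide
  have := inj ⟨2*a % 3, by omega⟩ ⟨c % 3, by omega⟩ h
  simp [Fin.mk.injEq] at this
  omega

private lemma frob (e : ℕ) : ((X:Polynomial (ZMod 2))+1)^(2^e) = X^(2^e) + 1 := by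
  have := add_pow_char_pow (R := Polynomial (ZMod 2)) (p := 2) (n := e) (x := X) (y := 1)
  rw [this, one_pow]

private lemma base (a c : ℕ) (hE : (X+1)^a + (X^2+X+1)^1 = (X^c : Polynomial (ZMod 2))) :
    (a = 1 ∧ c = 2) ∨ (a = 2 ∧ c = 1) ∨ (a = 3 ∧ c = 3) := by
  have ha1 : 1 ≤ a := a_pos le_rfl hE
  have hc1 : 1 ≤ c := c_pos ha1 hE
  have hD := derivE a 1 c hE
  simp only [Nat.cast_one, one_mul, pow_zero, Nat.sub_self, mul_one] at hD
  rcases Nat.even_or_odd a with hae | hao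
  · rw [cast_even (Nat.even_iff.mp hae), zero_mul, zero_add] at hD
    rcases Nat.even_or_odd c with hce | hco
    · rw [cast_even (Nat.even_iff.mp hce), zero_mul] at hD
      exact absurd hD one_ne_zero
    · rw [cast_odd (Nat.odd_iff.mp hco), one_mul] at hD
      have hc2 : c = 1 := by
        have := congrArg natDegree hD
        rw [natDegree_one, natDegree_X_pow] at this
        omega
      subst hc2
      have hsq : ((X:Polynomial (ZMod 2))+1)^a = (X+1)^2 := by
        linear_combination hE - (X^2+X+1) * two_zero
      have := congrArg natDegree hsq
      rw [nd_xp1, nd_xp1] at this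
      exact Or.inr (Or.inl ⟨this, rfl⟩)
  · rw [cast_odd (Nat.odd_iff.mp hao), one_mul] at hD
    rcases Nat.even_or_odd c with hce | hco
    · rw [cast_even (Nat.even_iff.mp hce), zero_mul] at hD
      have h1 : ((X:Polynomial (ZMod 2))+1)^(a-1) = 1 := by linear_combination hD - two_zero
      have := congrArg natDegree h1
      rw [nd_xp1, natDegree_one] at this
      have ha' : a = 1 := by omega
      subst ha'
      have hx : (X:Polynomial (ZMod 2))^2 = X^c := by
        linear_combination hE - (X+1) * two_zero
      have := congrArg natDegree hx
      rw [natDegree_X_pow, natDegree_X_pow] at this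
      exact Or.inl ⟨rfl, this.symm⟩
    · rw [cast_odd (Nat.odd_iff.mp hco), one_mul] at hD
      by_cases hc1' : c = 1
      · subst hc1'
        simp only [Nat.sub_self, pow_zero] at hD
        have : ((X:Polynomial (ZMod 2))+1)^(a-1) = 0 := by linear_combination hD
        exact absurd this (pow_ne_zero _ monic_xp1.ne_zero)
      · have hc3 : 3 ≤ c := by rcases hco with ⟨k, hk⟩; omega
        by_cases ha1' : a = 1
        · subst ha1'
          simp only [Nat.sub_self, pow_zero] at hD
          have : (X:Polynomial (ZMod 2))^(c-1) = 0 := by linear_combination -hD + two_zero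
          exact absurd this (pow_ne_zero _ X_ne_zero)
        · have ha3 : 3 ≤ a := by rcases hao with ⟨k, hk⟩; omega
          have hD' : ((X:Polynomial (ZMod 2))+1)^(a-1) = X^(c-1) + 1 := by
            linear_combination hD - two_zero
          have hac : a = c := by
            have := congrArg natDegree hD'
            rw [nd_xp1, show (1 : Polynomial (ZMod 2)) = C 1 from rfl,
              natDegree_X_pow_add_C] at this
            omega
          obtain ⟨e, he⟩ := pow2_of (a-1) (by omega) (by rw [hD', hac])
          have he1 : 1 ≤ e := by
            rcases Nat.eq_zero_or_pos e with h | h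
            · subst h; simp at he; omega
            · exact h
          have hae' : a = 2^e + 1 := by omega
          have hce' : c = 2^e + 1 := by omega
          have hE' : ((X:Polynomial (ZMod 2))^(2^e)+1) * (X+1) + (X^2+X+1) = X^(2^e+1) := by
            rw [← frob, ← pow_succ]
            rw [pow_one, hae', hce'] at hE
            exact hE
          have hX : (X:Polynomial (ZMod 2))^(2^e) = X^2 := by
            linear_combination hE' - (X^2+X+1) * two_zero
          have h22 : (2:ℕ)^e = 2 := by
            have := congrArg natDegree hX
            rwa [natDegree_X_pow, natDegree_X_pow] at this
          have he2 : e = 1 := Nat.pow_right_injective (le_refl 2)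
            (by rw [h22, pow_one] : (2:ℕ)^e = 2^1)
          exact Or.inr (Or.inr ⟨by omega, by omega⟩)

private lemma sqrtE {a b c a' b' c' : ℕ} (ha : a = 2*a') (hb : b = 2*b') (hc : c = 2*c')
    (hE : (X+1)^a + (X^2+X+1)^b = (X^c : Polynomial (ZMod 2))) :
    (X+1)^a' + (X^2+X+1)^b' = (X^c' : Polynomial (ZMod 2)) := by
  subst ha hb hc
  apply sq_inj
  rw [show 2*a' = a'*2 by ring, show 2*b' = b'*2 by ring, show 2*c' = c'*2 by ring] at hE
  rw [pow_mul, pow_mul, pow_mul] at hE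
  linear_combination hE + ((X+1)^a' * (X^2+X+1)^b') * two_zero

private lemma main_lemma : ∀ b : ℕ, ∀ a c : ℕ, 1 ≤ b →
    ((X+1)^a + (X^2+X+1)^b = (X^c : Polynomial (ZMod 2))) →
    ∃ r : ℕ, (a = 2 ^ r ∧ b = 2 ^ r ∧ c = 2 * b) ∨
      (b = 2 ^ r ∧ c = 2 ^ r ∧ a = 2 * b) ∨
      (b = 2 ^ r ∧ a = 3 * b ∧ c = 3 * b) := by
  intro b
  induction b using Nat.strong_induction_on with
  | _ b IH =>
    intro a c hb hE
    have ha1 : 1 ≤ a := a_pos hb hE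
    have hc1 : 1 ≤ c := c_pos ha1 hE
    have hD := derivE a b c hE
    rcases Nat.even_or_odd b with hbe | hbo
    · -- b even
      have hb2 : b % 2 = 0 := Nat.even_iff.mp hbe
      rw [cast_even hb2, zero_mul, add_zero] at hD
      have ha2 : a % 2 = 0 := by
        by_contra h
        rw [cast_odd (by omega), one_mul] at hD
        rcases Nat.even_or_odd c with hce | hco
        · rw [cast_even (Nat.even_iff.mp hce), zero_mul] at hD
          exact absurd hD (pow_ne_zero _ monic_xp1.ne_zero)
        · rw [cast_odd (Nat.odd_iff.mp hco), one_mul] at hD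
          have hc2 : c = 1 := by
            have := congrArg (eval 0) hD
            simp at this
            rcases Nat.eq_zero_or_pos (c-1) with h0 | h0
            · omega
            · rw [zero_pow (by omega)] at this
              cases this
          subst hc2
          have ha' : a = 1 := by
            have := congrArg natDegree hD
            simp only [Nat.sub_self, pow_zero, natDegree_one, nd_xp1] at this
            omega
          subst ha'
          have hm1 : (X^2+X+1 : Polynomial (ZMod 2))^b = 1 := by
            linear_combination hE - two_zero
          have := congrArg natDegree hm1
          rw [nd_m_pow, natDegree_one] at this
          omega
      have hc2 : c % 2 = 0 := by
        by_contra h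
        rw [cast_even ha2, zero_mul, cast_odd (by omega), one_mul] at hD
        exact absurd hD.symm (pow_ne_zero _ X_ne_zero)
      have hE' := sqrtE (a' := a/2) (b' := b/2) (c' := c/2) (by omega) (by omega) (by omega) hE
      obtain ⟨r, hcase⟩ := IH (b/2) (by omega) (a/2) (c/2) (by omega) hE'
      refine ⟨r+1, ?_⟩
      rcases hcase with ⟨h1, h2, h3⟩ | ⟨h1, h2, h3⟩ | ⟨h1, h2, h3⟩
      · exact Or.inl ⟨by omega, by omega, by omega⟩
      · exact Or.inr (Or.inl ⟨by omega, by omega, by omega⟩)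
      · exact Or.inr (Or.inr ⟨by omega, by omega, by omega⟩)
    · -- b odd
      have hb2 : b % 2 = 1 := Nat.odd_iff.mp hbo
      rw [cast_odd hb2, one_mul] at hD
      by_cases hb1 : b = 1
      · subst hb1
        rcases base a c hE with ⟨h1, h2⟩ | ⟨h1, h2⟩ | ⟨h1, h2⟩
        · exact ⟨0, Or.inl ⟨by omega, by omega, by omega⟩⟩
        · exact ⟨0, Or.inr (Or.inl ⟨by omega, by omega, by omega⟩)⟩
        · exact ⟨0, Or.inr (Or.inr ⟨by omega, by omega, by omega⟩)⟩
      · exfalso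
        have hb3 : 3 ≤ b := by omega
        have ha2 : a % 2 = 1 := by
          by_contra h
          rw [cast_even (by omega), zero_mul, zero_add] at hD
          rcases Nat.even_or_odd c with hce | hco
          · rw [cast_even (Nat.even_iff.mp hce), zero_mul] at hD
            exact absurd hD (pow_ne_zero _ monic_m.ne_zero)
          · rw [cast_odd (Nat.odd_iff.mp hco), one_mul] at hD
            have hc2 : c = 1 := by
              have := congrArg (eval 0) hD
              simp at this
              rcases Nat.eq_zero_or_pos (c-1) with h0 | h0
              · omega
              · rw [zero_pow (by omega)] at this
                cases this
            subst hc2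
            simp only [Nat.sub_self, pow_zero, mul_one] at hD
            have := congrArg natDegree hD
            rw [nd_m_pow, natDegree_one] at this
            omega
        rw [cast_odd ha2, one_mul] at hD
        have hc2 : c % 2 = 1 := by
          by_contra h
          rw [cast_even (by omega), zero_mul] at hD
          have heq : ((X:Polynomial (ZMod 2))+1)^(a-1) = (X^2+X+1)^(b-1) := by
            linear_combination hD - (X^2+X+1)^(b-1) * two_zero
          have ha' : a = 1 := by
            have := congrArg (eval 1) heq
            simp only [eval_pow, eval_add, eval_X, eval_one, one_pow] at this
            rw [show ((1:ZMod 2)+1+1) = 1 by decide, show (1+1 : ZMod 2) = 0 by decide,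
              one_pow] at this
            rcases Nat.eq_zero_or_pos (a-1) with h0 | h0
            · omega
            · rw [zero_pow (by omega)] at this
              cases this
          subst ha'
          simp only [Nat.sub_self, pow_zero] at heq
          have := congrArg natDegree heq
          rw [nd_m_pow, natDegree_one] at this
          omega
        rw [cast_odd hc2, one_mul] at hD
        have hE' := sqrtE (a' := (a-1)/2) (b' := (b-1)/2) (c' := (c-1)/2)
          (by omega) (by omega) (by omega) hD
        obtain ⟨r, hcase⟩ := IH ((b-1)/2) (by omega) ((a-1)/2) ((c-1)/2) (by omega) hE'
        have h3 := mod3_eq a b c hb hE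
        rcases hcase with ⟨h1, h2, hh3⟩ | ⟨h1, h2, hh3⟩ | ⟨h1, h2, hh3⟩ <;> omega

private lemma fwd1 (r : ℕ) :
    (X+1)^(2^r) + (X^2+X+1)^(2^r) = (X^(2*2^r) : Polynomial (ZMod 2)) := by
  have h := add_pow_char_pow (R := Polynomial (ZMod 2)) (p := 2) (n := r)
    (x := (X+1 : Polynomial (ZMod 2))) (y := (X^2+X+1 : Polynomial (ZMod 2)))
  rw [← h, show ((X:Polynomial (ZMod 2))+1) + (X^2+X+1) = X^2 by
    linear_combination (X+1) * two_zero, ← pow_mul]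

private lemma fwd2 (r : ℕ) :
    (X+1)^(2*2^r) + (X^2+X+1)^(2^r) = (X^(2^r) : Polynomial (ZMod 2)) := by
  have h := add_pow_char_pow (R := Polynomial (ZMod 2)) (p := 2) (n := r)
    (x := ((X+1)^2 : Polynomial (ZMod 2))) (y := (X^2+X+1 : Polynomial (ZMod 2)))
  rw [pow_mul, ← h, show ((X:Polynomial (ZMod 2))+1)^2 + (X^2+X+1) = X by
    linear_combination (X^2+X+1) * two_zero]

private lemma fwd3 (r : ℕ) :
    (X+1)^(3*2^r) + (X^2+X+1)^(2^r) = (X^(3*2^r) : Polynomial (ZMod 2)) := by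
  have h := add_pow_char_pow (R := Polynomial (ZMod 2)) (p := 2) (n := r)
    (x := ((X+1)^3 : Polynomial (ZMod 2))) (y := (X^2+X+1 : Polynomial (ZMod 2)))
  rw [pow_mul, ← h, show ((X:Polynomial (ZMod 2))+1)^3 + (X^2+X+1) = X^3 by
    linear_combination (2*X^2+2*X+1) * two_zero, ← pow_mul]

theorem xp1_pow_add_m1_pow_eq_x_pow (a b c : ℕ) (hb : 1 ≤ b) :
    (((X + 1) ^ a + (X ^ 2 + X + 1) ^ b : Polynomial (ZMod 2)) = X ^ c) ↔
      ∃ r : ℕ, (a = 2 ^ r ∧ b = 2 ^ r ∧ c = 2 * b) ∨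
        (b = 2 ^ r ∧ c = 2 ^ r ∧ a = 2 * b) ∨
        (b = 2 ^ r ∧ a = 3 * b ∧ c = 3 * b) := by
  constructor
  · intro hE
    exact main_lemma b a c hb hE
  · rintro ⟨r, ⟨ha, hb', hc⟩ | ⟨hb', hc, ha⟩ | ⟨hb', ha, hc⟩⟩
    · subst ha hb' hc; exact fwd1 r
    · subst hb' hc ha; exact fwd2 r
    · subst hb' ha hc; exact fwd3 r
end

section
/- In F_2[x], for natural numbers a ≤ b and c, d, the identity (x+1)^a + (x+1)^b = x^c (x+1)^d with c ≥ 1 holds if and only if b = a + 2^r, c = 2^r, and d = a for some natural number r. -/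
open Polynomial

lemma odd_case (s : ℕ) (hs : Odd s)
    (h : ((X + 1 : Polynomial (ZMod 2)) ^ s = X ^ s + 1)) : s = 1 := by
  have hs1 : 1 ≤ s := hs.pos
  have hd := congrArg derivative h
  simp only [derivative_pow, derivative_add, derivative_one, derivative_X, add_zero,
    mul_one] at hd
  have hCs : (C (s : ZMod 2) : Polynomial (ZMod 2)) = 1 := by
    have h1 : (s : ZMod 2) = 1 := by
      rcases hs with ⟨k, hk⟩
      subst hk; push_cast
      rw [show ((2:ZMod 2)) = 0 from by decide]; ring
    rw [h1, map_one]
  rw [hCs, one_mul, one_mul] at hd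
  have h2 : ((X + 1 : Polynomial (ZMod 2)) ^ s) = (X + 1) * X ^ (s - 1) := by
    rw [← hd, ← pow_succ']
    congr 1
    omega
  rw [h2] at h
  have h3 : (X : Polynomial (ZMod 2)) ^ (s - 1) = 1 := by
    rw [add_mul, one_mul] at h
    have hss : (X : Polynomial (ZMod 2)) * X ^ (s - 1) = X ^ s := by
      rw [← pow_succ']; congr 1; omega
    rw [hss] at h
    exact add_left_cancel h
  by_contra hne
  have hpos : 0 < s - 1 := by omega
  have h4 := congrArg (eval 0) h3
  rw [eval_pow, eval_X, eval_one, zero_pow hpos.ne'] at h4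
  exact zero_ne_one h4

lemma pow_two_of_eq (m : ℕ) (hm : 1 ≤ m)
    (h : ((X + 1 : Polynomial (ZMod 2)) ^ m = X ^ m + 1)) : ∃ r, m = 2 ^ r := by
  obtain ⟨r, s, hs, rfl⟩ : ∃ r s, Odd s ∧ m = 2 ^ r * s := by
    refine ⟨m.factorization 2, m / 2 ^ m.factorization 2,
      Nat.not_even_iff_odd.mp (fun he =>
        Nat.not_dvd_ordCompl Nat.prime_two (by omega) he.two_dvd), ?_⟩
    exact (Nat.ordProj_mul_ordCompl_eq_self m 2).symm
  refine ⟨r, ?_⟩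
  have h' : (((X + 1 : Polynomial (ZMod 2)) ^ s) ^ (2 ^ r)) = ((X ^ s + 1) ^ (2 ^ r)) := by
    rw [add_pow_char_pow, one_pow, ← pow_mul, ← pow_mul, mul_comm s (2 ^ r)]
    exact h
  have hinj := iterateFrobenius_inj (Polynomial (ZMod 2)) 2 r
  have hss : ((X + 1 : Polynomial (ZMod 2)) ^ s) = X ^ s + 1 := by
    apply hinj
    rw [iterateFrobenius_def, iterateFrobenius_def]
    exact h'
  rw [odd_case s hs hss, mul_one]

theorem xp1_pow_add_xp1_pow (a b c d : ℕ) (hab : a ≤ b) (hc : 1 ≤ c) :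
    (((X + 1) ^ a + (X + 1) ^ b : Polynomial (ZMod 2)) = X ^ c * (X + 1) ^ d) ↔
      ∃ r : ℕ, b = a + 2 ^ r ∧ c = 2 ^ r ∧ d = a := by
  have hX1 : (X + 1 : Polynomial (ZMod 2)) ≠ 0 := by
    intro h
    have := congrArg (eval 0) h
    simp at this
  have hXC : (X + 1 : Polynomial (ZMod 2)) = X - C 1 := by
    rw [map_one, sub_eq_add_neg]
    congr 1
    exact (CharTwo.neg_eq _).symm
  constructor
  · intro h
    -- first: a < b
    have hne : a ≠ b := by
      intro hEq
      subst hEq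
      rw [CharTwo.add_self_eq_zero] at h
      exact (mul_ne_zero (pow_ne_zero _ X_ne_zero) (pow_ne_zero _ hX1)) h.symm
    have hlt : a < b := lt_of_le_of_ne hab hne
    set m := b - a with hm
    have hb : b = a + m := by omega
    have hm1 : 1 ≤ m := by omega
    have hfac : ((X + 1 : Polynomial (ZMod 2)) ^ a * (1 + (X + 1) ^ m)) = X ^ c * (X + 1) ^ d := by
      rw [← h, hb, pow_add]; ring
    -- d = a via rootMultiplicity at 1
    have hq : ((1 : Polynomial (ZMod 2)) + (X + 1) ^ m) ≠ 0 := by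
      intro h0
      have h1 := congrArg (eval 1) h0
      simp only [eval_add, eval_one, eval_pow, eval_X] at h1
      rw [show ((1:ZMod 2)+1) = 0 from by decide, zero_pow (by omega : m ≠ 0)] at h1
      simp at h1
    have hda : d = a := by
      have hL : rootMultiplicity (1 : ZMod 2)
          ((X + 1 : Polynomial (ZMod 2)) ^ a * (1 + (X + 1) ^ m)) = a := by
        rw [rootMultiplicity_mul (mul_ne_zero (pow_ne_zero _ hX1) hq)]
        rw [hXC, rootMultiplicity_X_sub_C_pow]
        rw [rootMultiplicity_eq_zero, add_zero]
        intro h0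
        simp only [IsRoot, eval_add, eval_one, eval_pow, eval_sub, eval_X, eval_C,
          sub_self] at h0
        rw [zero_pow (by omega : m ≠ 0)] at h0
        simp at h0
      have hR : rootMultiplicity (1 : ZMod 2)
          ((X : Polynomial (ZMod 2)) ^ c * (X + 1) ^ d) = d := by
        rw [rootMultiplicity_mul (mul_ne_zero (pow_ne_zero _ X_ne_zero) (pow_ne_zero _ hX1))]
        rw [hXC, rootMultiplicity_X_sub_C_pow]
        rw [rootMultiplicity_eq_zero, zero_add]
        intro h0
        simp only [IsRoot, eval_pow, eval_X, one_pow] at h0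
        exact one_ne_zero h0
      rw [← hR, ← hfac, hL]
    rw [hda] at hfac
    have hcan : ((1 : Polynomial (ZMod 2)) + (X + 1) ^ m) = X ^ c := by
      apply mul_left_cancel₀ (pow_ne_zero a hX1)
      rw [hfac]; ring
    -- degrees: c = m
    have hdeg : m = c := by
      have hXd : ((X + 1 : Polynomial (ZMod 2))).natDegree = 1 := by
        rw [show ((X:Polynomial (ZMod 2))+1) = X + C 1 from by rw [C_1], natDegree_X_add_C]
      have h1 : ((1 : Polynomial (ZMod 2)) + (X + 1) ^ m).natDegree = m := by
        rw [add_comm, natDegree_add_eq_left_of_natDegree_lt, natDegree_pow, hXd, mul_one]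
        rw [natDegree_pow, natDegree_one, hXd]
        omega
      rw [← h1, hcan, natDegree_X_pow]
    have hpow : ((X + 1 : Polynomial (ZMod 2)) ^ m) = X ^ m + 1 := by
      have := hcan
      rw [← hdeg] at this
      have h2 : ((X + 1 : Polynomial (ZMod 2)) ^ m) = 1 + (1 + (X + 1) ^ m) := by
        rw [← add_assoc, CharTwo.add_self_eq_zero, zero_add]
      rw [h2, this, add_comm]
    obtain ⟨r, hr⟩ := pow_two_of_eq m hm1 hpow
    exact ⟨r, by omega, by omega, hda⟩
  · rintro ⟨r, hb, hcr, hd⟩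
    subst hb hcr hd
    have hfrob : ((X + 1 : Polynomial (ZMod 2)) ^ 2 ^ r) = X ^ 2 ^ r + 1 := by
      rw [add_pow_char_pow, one_pow]
    rw [pow_add, hfrob, mul_add, mul_one, add_comm ((X+1)^d * X ^ 2 ^ r), ← add_assoc,
      CharTwo.add_self_eq_zero, zero_add, mul_comm]
end

section
/- In F_2[x], for positive integers a, b and natural number c, the identity 1 + (x+1)^a = x^b (x^2+x+1)^c holds if and only if (a = b = 2^r and c = 0) or (a = 3·2^r and b = c = 2^r), for some natural number r. -/
open Polynomial
abbrev P2 := Polynomial (ZMod 2)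

lemma castE {n : ℕ} (h : n % 2 = 0) : ((n:ZMod 2)) = 0 := by
  rw [← ZMod.natCast_mod n 2, h]; rfl
lemma castO {n : ℕ} (h : n % 2 = 1) : ((n:ZMod 2)) = 1 := by
  rw [← ZMod.natCast_mod n 2, h]; rfl

lemma dL (a : ℕ) : derivative (1 + (X+1)^a : P2) = C ((a:ZMod 2)) * (X+1)^(a-1) := by
  simp [derivative_pow]

lemma dR (b c : ℕ) : derivative (X^b * (X^2+X+1)^c : P2) =
    C ((b:ZMod 2)) * (X^(b-1) * (X^2+X+1)^c) + C ((c:ZMod 2)) * (X^b * (X^2+X+1)^(c-1)) := by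
  have h2 : C ((2:ZMod 2)) = (0 : P2) := by rw [(by decide : (2:ZMod 2) = 0)]; simp
  simp [derivative_pow, derivative_X_pow, h2]
  ring

lemma hsM : (X^2+X+1 : P2).Monic := by monicity!
lemma hs0 : (X^2+X+1 : P2) ≠ 0 := hsM.ne_zero
lemma hsd : (X^2+X+1 : P2).natDegree = 2 := by compute_degree!
lemma hX1 : (X+1 : P2) ≠ 0 := fun h => by have := congrArg (eval 0) h; simp at this
lemma hX1M : (X+1 : P2).Monic := by monicity!
lemma hX1d : (X+1 : P2).natDegree = 1 := by compute_degree!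
lemma z2a : (1+1 : ZMod 2) = 0 := by decide
lemma z2b : (1+1+1 : ZMod 2) = 1 := by decide
lemma sq_inj_s5 (p q : P2) (h : p^2 = q^2) : p = q := by
  have h0 : (p+q)^2 = 0 := by rw [CharTwo.add_sq, h, CharTwo.add_self_eq_zero]
  have := pow_eq_zero_iff (n := 2) (by norm_num) |>.mp h0
  simpa using CharTwo.add_eq_iff_eq_add.mp this

lemma key : ∀ a b c : ℕ, 0 < a → 0 < b →
    ((1 + (X + 1) ^ a : P2) = X ^ b * (X ^ 2 + X + 1) ^ c) →
    ∃ r : ℕ, (a = 2 ^ r ∧ b = 2 ^ r ∧ c = 0) ∨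
      (a = 3 * 2 ^ r ∧ b = 2 ^ r ∧ c = 2 ^ r) := by
  intro a
  induction a using Nat.strong_induction_on with
  | _ a IH =>
  intro b c ha hb h
  have hd := congrArg derivative h
  rw [dL, dR] at hd
  rcases Nat.even_or_odd a with haE | haO
  · -- a even
    have haE' := Nat.even_iff.mp haE
    rw [castE haE', map_zero, zero_mul] at hd
    have hbE : b % 2 = 0 := by
      by_contra hbO
      rw [castO (by omega)] at hd
      rcases Nat.even_or_odd c with hcE | hcO
      · rw [castE (Nat.even_iff.mp hcE), map_zero, zero_mul, add_zero, map_one, one_mul] at hd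
        exact (mul_ne_zero (pow_ne_zero _ X_ne_zero) (pow_ne_zero _ hs0)) hd.symm
      · have hcO' := Nat.odd_iff.mp hcO
        rw [castO hcO', map_one, one_mul, one_mul] at hd
        obtain ⟨b', rfl⟩ : ∃ b', b = b' + 1 := ⟨b - 1, by omega⟩
        obtain ⟨c', rfl⟩ : ∃ c', c = c' + 1 := ⟨c - 1, by omega⟩
        simp only [Nat.add_sub_cancel] at hd
        have : (0:P2) = X^b' * (X^2+X+1)^c' * (X+1)^2 := by
          rw [hd]; ring
        exact (mul_ne_zero (mul_ne_zero (pow_ne_zero _ X_ne_zero) (pow_ne_zero _ hs0))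
          (pow_ne_zero _ hX1)) this.symm
    have hcE : c % 2 = 0 := by
      by_contra hcO
      rw [castE hbE, map_zero, zero_mul, zero_add,
        castO (by omega : c % 2 = 1), map_one, one_mul] at hd
      exact (mul_ne_zero (pow_ne_zero _ X_ne_zero) (pow_ne_zero _ hs0)) hd.symm
    obtain ⟨a', rfl⟩ : ∃ a', a = 2 * a' := ⟨a/2, by omega⟩
    obtain ⟨b', rfl⟩ : ∃ b', b = 2 * b' := ⟨b/2, by omega⟩
    obtain ⟨c', rfl⟩ : ∃ c', c = 2 * c' := ⟨c/2, by omega⟩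
    have hsq : ((1 + (X + 1) ^ a' : P2))^2 = ((X ^ b' * (X ^ 2 + X + 1) ^ c' : P2))^2 := by
      rw [CharTwo.add_sq, one_pow, mul_pow, ← pow_mul, ← pow_mul, ← pow_mul,
        mul_comm a' 2, mul_comm b' 2, mul_comm c' 2]
      exact h
    have h' := sq_inj_s5 _ _ hsq
    obtain ⟨r, hr⟩ := IH a' (by omega) b' c' (by omega) (by omega) h'
    refine ⟨r + 1, ?_⟩
    rcases hr with ⟨h1, h2, h3⟩ | ⟨h1, h2, h3⟩
    · exact Or.inl ⟨by rw [h1]; ring, by rw [h2]; ring, by omega⟩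
    · exact Or.inr ⟨by rw [h1]; ring, by rw [h2]; ring, by rw [h3]; ring⟩
  · -- a odd
    have haO' := Nat.odd_iff.mp haO
    rw [castO haO', map_one, one_mul] at hd
    rcases Nat.even_or_odd b with hbE | hbO
    · exfalso
      rw [castE (Nat.even_iff.mp hbE), map_zero, zero_mul, zero_add] at hd
      rcases Nat.even_or_odd c with hcE | hcO
      · rw [castE (Nat.even_iff.mp hcE), map_zero, zero_mul] at hd
        exact (pow_ne_zero _ hX1) hd
      · rw [castO (Nat.odd_iff.mp hcO), map_one, one_mul] at hd
        have := congrArg (eval 0) hd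
        simp [zero_pow hb.ne'] at this
    · -- b odd
      have hbO' := Nat.odd_iff.mp hbO
      rw [castO hbO', map_one, one_mul] at hd
      have hb1 : b = 1 := by
        by_contra hb1
        have := congrArg (eval 0) hd
        rcases Nat.even_or_odd c with hcE | hcO
        · rw [castE (Nat.even_iff.mp hcE), map_zero, zero_mul, add_zero] at this
          simp [zero_pow (by omega : b - 1 ≠ 0)] at this
        · rw [castO (Nat.odd_iff.mp hcO), map_one, one_mul] at this
          simp [zero_pow (by omega : b - 1 ≠ 0), zero_pow hb.ne'] at this
      subst hb1
      simp only [Nat.sub_self, pow_zero, one_mul, pow_one] at hd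
      rcases Nat.even_or_odd c with hcE | hcO
      · rw [castE (Nat.even_iff.mp hcE), map_zero, zero_mul, add_zero] at hd
        have ha1 : a = 1 := by
          by_contra ha1
          have := congrArg (eval 1) hd
          simp [zero_pow (by omega : a - 1 ≠ 0), z2a, z2b] at this
        subst ha1
        have hc0 : c = 0 := by
          have := congrArg natDegree hd
          simp [hsM.natDegree_pow, hsd] at this
          omega
        exact ⟨0, Or.inl ⟨by norm_num, by norm_num, hc0⟩⟩
      · -- c odd
        rw [castO (Nat.odd_iff.mp hcO), map_one, one_mul] at hd
        obtain ⟨c', rfl⟩ : ∃ c', c = c' + 1 :=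
          ⟨c - 1, by have := Nat.odd_iff.mp hcO; omega⟩
        simp only [Nat.add_sub_cancel] at hd
        have hd2 : ((X:P2)+1)^(a-1) = (X^2+X+1)^c' * (X+1)^2 := by
          rw [hd]; ring
        have ha3 : 3 ≤ a := by
          rcases (by omega : a = 1 ∨ 3 ≤ a) with h1 | h3
          · exfalso
            subst h1
            have := congrArg (eval 1) hd2
            simp [z2a, z2b] at this
          · exact h3
        have hd3 : ((X:P2)+1)^(a-3) = (X^2+X+1)^c' := by
          have e : ((X:P2)+1)^(a-1) = (X+1)^(a-3) * (X+1)^2 := by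
            rw [← pow_add]; congr 1; omega
          rw [e] at hd2
          exact mul_right_cancel₀ (pow_ne_zero _ hX1) hd2
        have ha3' : a = 3 := by
          by_contra hne
          have := congrArg (eval 1) hd3
          simp [zero_pow (by omega : a - 3 ≠ 0), z2a, z2b] at this
        have hc1 : c' = 0 := by
          have := congrArg natDegree hd3
          rw [hX1M.natDegree_pow, hsM.natDegree_pow, hsd, hX1d] at this
          omega
        exact ⟨0, Or.inr ⟨by omega, by norm_num, by omega⟩⟩

lemma h2P : (2:P2) = 0 := CharTwo.two_eq_zero
lemma frob_s5 (p q : P2) (n : ℕ) : (p+q)^(2^n) = p^(2^n)+q^(2^n) := add_pow_char_pow p q 2 n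
lemma rev1 (r : ℕ) : (1 + (X + 1) ^ (2^r) : P2) = X ^ (2^r) * (X ^ 2 + X + 1) ^ 0 := by
  rw [frob_s5, pow_zero, one_pow]; linear_combination h2P
lemma rev2 (r : ℕ) : (1 + (X + 1) ^ (3*2^r) : P2) = X ^ (2^r) * (X ^ 2 + X + 1) ^ (2^r) := by
  have e1 : ((X:P2)+1)^(3*2^r) = ((X:P2)^(2^r)+1)^3 := by
    rw [mul_comm 3, pow_mul, frob_s5, one_pow]
  have e2 : ((X:P2)^2+X+1)^(2^r) = ((X:P2)^(2^r))^2 + X^(2^r) + 1 := by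
    rw [frob_s5, frob_s5, one_pow, ← pow_mul, ← pow_mul, mul_comm]
  rw [e1, e2]
  linear_combination (((X:P2)^(2^r))^2 + (X:P2)^(2^r) + 1) * h2P

theorem one_add_xp1_pow (a b c : ℕ) (ha : 0 < a) (hb : 0 < b) :
    ((1 + (X + 1) ^ a : Polynomial (ZMod 2)) = X ^ b * (X ^ 2 + X + 1) ^ c) ↔
      ∃ r : ℕ, (a = 2 ^ r ∧ b = 2 ^ r ∧ c = 0) ∨
        (a = 3 * 2 ^ r ∧ b = 2 ^ r ∧ c = 2 ^ r) := by
  constructor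
  · exact key a b c ha hb
  · rintro ⟨r, ⟨rfl, rfl, rfl⟩ | ⟨rfl, rfl, rfl⟩⟩
    · exact rev1 r
    · exact rev2 r
end

section
/- Let S = 1 + x^c (x+1)^d (x^2+x+1)^e ∈ F_2[x] with c, d, e positive integers. Then for every positive integer h, the polynomial x^2+x+1 does not divide σ(S^{2h}) = 1 + S + S^2 + ⋯ + S^{2h}. -/
open Polynomial

theorem m1_not_dvd_sigma_sq (c d e : ℕ) (hc : 0 < c) (hd : 0 < d) (he : 0 < e)
    (S : Polynomial (ZMod 2))
    (hS : S = 1 + X ^ c * (X + 1) ^ d * (X ^ 2 + X + 1) ^ e)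
    (h : ℕ) (hh : 0 < h) :
    ¬ (X ^ 2 + X + 1 : Polynomial (ZMod 2)) ∣ ∑ i ∈ Finset.range (2 * h + 1), S ^ i := by
  intro hdvd
  set m : Polynomial (ZMod 2) := X ^ 2 + X + 1 with hm
  obtain ⟨e', rfl⟩ : ∃ e', e = e' + 1 := ⟨e - 1, (Nat.succ_pred_eq_of_pos he).symm⟩
  have hSm : m ∣ S - 1 := by
    refine ⟨X ^ c * (X + 1) ^ d * m ^ e', ?_⟩
    rw [hS, hm]; ring
  have hpow : ∀ i : ℕ, m ∣ S ^ i - 1 := by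
    intro i
    have := sub_dvd_pow_sub_pow S 1 i
    rw [one_pow] at this
    exact hSm.trans this
  have hsum : m ∣ ∑ i ∈ Finset.range (2 * h + 1), (S ^ i - 1) :=
    Finset.dvd_sum fun i _ => hpow i
  have heq : (∑ i ∈ Finset.range (2 * h + 1), S ^ i)
      - ∑ i ∈ Finset.range (2 * h + 1), (S ^ i - 1) = 1 := by
    have h2 : ((2 : ℕ) : Polynomial (ZMod 2)) = 0 := CharP.cast_eq_zero _ 2
    rw [Finset.sum_sub_distrib, sub_sub_cancel, Finset.sum_const, Finset.card_range,
      nsmul_eq_mul, mul_one]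
    push_cast
    rw [show ((2 : Polynomial (ZMod 2)) = 0) from by exact_mod_cast h2]
    ring
  have hone : m ∣ 1 := heq ▸ dvd_sub hdvd hsum
  have hdeg : m.natDegree = 2 := by
    rw [hm]; compute_degree!
  have := Polynomial.natDegree_eq_zero_of_isUnit (isUnit_of_dvd_one hone)
  omega
end

section
/- Let Q = 1 + x^a(x+1)^b(x^2+x+1)^c ∈ F_2[x] with a, b, c positive integers and gcd(a,b,c) = 1. If the reciprocal polynomial Q* (defined by Q*(x) = x^{deg Q} Q(1/x)) satisfies Q* = Q, then either (a = 1, b = 2^n − 1, c = 2^n) or (a = 3, b = c = 2^n − 1) for some positive integer n. -/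
open Polynomial
set_option linter.unusedSectionVars false

section CharTwoField
variable {K : Type*} [Field K] [CharP K 2]

private lemma two_eq_zero' : (2 : K[X]) = 0 := CharTwo.two_eq_zero

private lemma xp1 (s : ℕ) : (X ^ s + 1 : K[X]) = X ^ s - C 1 := by
  rw [map_one, CharTwo.sub_eq_add]

private lemma xpow_add_one_natDegree (s : ℕ) : (X ^ s + 1 : K[X]).natDegree = s := by
  simpa using natDegree_X_pow_add_C (n := s) (r := (1 : K))

private lemma xpow_add_one_ne_zero (s : ℕ) (hs : 0 < s) : (X ^ s + 1 : K[X]) ≠ 0 := by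
  intro h0
  have h := xpow_add_one_natDegree (K := K) s
  rw [h0] at h
  simp at h
  omega

private lemma dvd_of_exp_dvd {m n : ℕ} (h : m ∣ n) : (X ^ m + 1 : K[X]) ∣ X ^ n + 1 := by
  obtain ⟨k, rfl⟩ := h
  rw [xp1, xp1, pow_mul]
  simpa using sub_dvd_pow_sub_pow (X ^ m : K[X]) (C 1) k

private lemma exp_dvd_of_dvd {m n : ℕ} (hm : 0 < m) (h : (X ^ m + 1 : K[X]) ∣ X ^ n + 1) :
    m ∣ n := by
  rcases Nat.eq_zero_or_pos (n % m) with hr | hr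
  · exact Nat.dvd_of_mod_eq_zero hr
  · exfalso
    have h1 : (X ^ m + 1 : K[X]) ∣ X ^ (m * (n / m)) + 1 := dvd_of_exp_dvd ⟨_, rfl⟩
    have h2 : (X ^ n + 1 : K[X])
        = X ^ (n % m) * (X ^ (m * (n / m)) + 1) + (X ^ (n % m) + 1) := by
      conv_lhs => rw [show n = m * (n / m) + n % m from (Nat.div_add_mod n m).symm]
      rw [pow_add]
      linear_combination (-(X ^ (n % m)) : K[X]) * (two_eq_zero' (K := K))
    have key : (X ^ m + 1 : K[X]) ∣ X ^ (n % m) + 1 := by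
      have h3 : (X ^ (n % m) + 1 : K[X])
          = (X ^ n + 1) - X ^ (n % m) * (X ^ (m * (n / m)) + 1) := by
        rw [h2]; ring
      rw [h3]
      exact dvd_sub h (Dvd.dvd.mul_left h1 _)
    have hd := natDegree_le_of_dvd key (xpow_add_one_ne_zero _ hr)
    rw [xpow_add_one_natDegree, xpow_add_one_natDegree] at hd
    have := Nat.mod_lt n hm
    omega

private lemma rm_pow {f : K[X]} (hf : f ≠ 0) (z : K) (k : ℕ) :
    rootMultiplicity z (f ^ k) = k * rootMultiplicity z f := by
  induction k with
  | zero =>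
    rw [pow_zero, zero_mul, rootMultiplicity_eq_zero]
    simp [IsRoot]
  | succ k ih =>
    rw [pow_succ, rootMultiplicity_mul (mul_ne_zero (pow_ne_zero _ hf) hf), ih]
    ring

private lemma rm_le_one {f : K[X]} (hf : f ≠ 0) (hsq : Squarefree f) (z : K) :
    rootMultiplicity z f ≤ 1 := by
  rw [rootMultiplicity_le_iff hf]
  intro hdvd
  exact not_isUnit_X_sub_C z (hsq (X - C z) (by rwa [← sq]))

open scoped Classical in
private lemma rm_X_pow (t m : ℕ) (hm : Odd m) (z : K) :
    rootMultiplicity z ((X : K[X]) ^ (2 ^ t * m) + 1) = if z ^ m = 1 then 2 ^ t else 0 := by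
  have hm0 : 0 < m := hm.pos
  have hfactor : ((X : K[X]) ^ (2 ^ t * m) + 1) = ((X : K[X]) ^ m + 1) ^ 2 ^ t := by
    rw [add_pow_char_pow, ← pow_mul, one_pow, mul_comm]
  have hne : ((X : K[X]) ^ m + 1) ≠ 0 := xpow_add_one_ne_zero m hm0
  rw [hfactor, rm_pow hne]
  by_cases hz : z ^ m = 1
  · rw [if_pos hz]
    have hcast : (m : K) ≠ 0 := by
      intro hc
      exact (Nat.not_even_iff_odd.mpr hm)
        (even_iff_two_dvd.mpr ((CharP.cast_eq_zero_iff K 2 m).mp hc))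
    have hsep : ((X : K[X]) ^ m + 1).Separable := by
      rw [xp1]
      exact separable_X_pow_sub_C 1 hcast one_ne_zero
    have hle : rootMultiplicity z ((X : K[X]) ^ m + 1) ≤ 1 := rm_le_one hne hsep.squarefree z
    have hpos : 0 < rootMultiplicity z ((X : K[X]) ^ m + 1) := by
      rw [rootMultiplicity_pos hne]
      simp [IsRoot, hz, CharTwo.add_self_eq_zero]
    have h1 : rootMultiplicity z ((X : K[X]) ^ m + 1) = 1 := le_antisymm hle hpos
    rw [h1, mul_one]
  · rw [if_neg hz, rootMultiplicity_eq_zero, mul_zero]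
    simp only [IsRoot, eval_add, eval_pow, eval_X, eval_one]
    intro hzero
    exact hz (by rw [← CharTwo.neg_eq 1]; exact eq_neg_of_add_eq_zero_left hzero)

end CharTwoField

private lemma reflect_pow_self {R : Type*} [CommSemiring R] (p : R[X]) (d : ℕ)
    (hd : p.natDegree ≤ d) (hp : p.reflect d = p) (k : ℕ) :
    (p ^ k).reflect (d * k) = p ^ k := by
  induction k with
  | zero => simpa using reflect_C (1 : R) 0
  | succ k ih =>
    have hdk : (p ^ k).natDegree ≤ d * k :=
      le_trans (natDegree_pow_le) (by nlinarith)
    rw [pow_succ, Nat.mul_succ, reflect_mul _ _ hdk hd, ih, hp]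

private lemma reflect_X_add_one {R : Type*} [CommSemiring R] :
    (X + 1 : R[X]).reflect 1 = X + 1 := by
  have h : (X + 1 : R[X]) = X ^ 1 + X ^ 0 := by simp
  rw [h, reflect_add, reflect_monomial, reflect_monomial, revAt_le (le_refl 1),
    revAt_le (Nat.zero_le 1)]
  simp [add_comm]

private lemma reflect_quad {R : Type*} [CommSemiring R] :
    (X ^ 2 + X + 1 : R[X]).reflect 2 = X ^ 2 + X + 1 := by
  have h : (X ^ 2 + X + 1 : R[X]) = X ^ 2 + X ^ 1 + X ^ 0 := by simp
  rw [h, reflect_add, reflect_add, reflect_monomial, reflect_monomial, reflect_monomial,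
    revAt_le (le_refl 2), revAt_le (by norm_num : 1 ≤ 2), revAt_le (Nat.zero_le 2)]
  norm_num
  ring

private lemma exists_omega : ∃ ω : GaloisField 2 2, ω ≠ 1 ∧ ω ^ 3 = 1 := by
  classical
  have hfin : Fintype (GaloisField 2 2) := Fintype.ofFinite _
  have hcard : Fintype.card (GaloisField 2 2) = 4 := by
    have h := GaloisField.card 2 2 (by norm_num)
    rwa [Nat.card_eq_fintype_card] at h
  have hcardu : Fintype.card (GaloisField 2 2)ˣ = 3 := by
    rw [Fintype.card_units, hcard]
  obtain ⟨u, hu⟩ := Fintype.exists_ne_of_one_lt_card (by rw [hcardu]; norm_num)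
    (1 : (GaloisField 2 2)ˣ)
  refine ⟨(u : GaloisField 2 2), ?_, ?_⟩
  · intro h
    exact hu (Units.ext h)
  · have h3 : u ^ 3 = 1 := by
      have := pow_card_eq_one (G := (GaloisField 2 2)ˣ) (x := u)
      rwa [hcardu] at this
    calc (u : GaloisField 2 2) ^ 3 = ((u ^ 3 : (GaloisField 2 2)ˣ) : GaloisField 2 2) := by
          push_cast; ring
      _ = 1 := by rw [h3]; rfl

-- extra factor lemma
section CharTwoField2
variable {K : Type*} [Field K] [CharP K 2]
private lemma xpow_factor (t m : ℕ) :
    ((X : K[X]) ^ (2 ^ t * m) + 1) = ((X : K[X]) ^ m + 1) ^ 2 ^ t := by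
  rw [add_pow_char_pow, ← pow_mul, one_pow, mul_comm]
end CharTwoField2

theorem selfreciprocal_2mersenne (a b c : ℕ) (ha : 0 < a) (hb : 0 < b) (hc : 0 < c)
    (hgcd : Nat.gcd a (Nat.gcd b c) = 1)
    (Q : Polynomial (ZMod 2))
    (hQ : Q = 1 + X ^ a * (X + 1) ^ b * (X ^ 2 + X + 1) ^ c)
    (hstar : Q.reflect (a + b + 2 * c) = Q) :
    ∃ n : ℕ, 0 < n ∧
      ((a = 1 ∧ b = 2 ^ n - 1 ∧ c = 2 ^ n) ∨ (a = 3 ∧ b = 2 ^ n - 1 ∧ c = 2 ^ n - 1)) := by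
  classical
  have two2 : (2 : (ZMod 2)[X]) = 0 := two_eq_zero'
  -- degree bounds
  have hXp1deg : (X + 1 : (ZMod 2)[X]).natDegree ≤ 1 := by
    refine le_trans (natDegree_add_le _ _) ?_
    simp [natDegree_X_le]
  have hquaddeg : (X ^ 2 + X + 1 : (ZMod 2)[X]).natDegree ≤ 2 := by
    refine le_trans (natDegree_add_le _ _) ?_
    refine max_le (le_trans (natDegree_add_le _ _) ?_) ?_
    · simp [natDegree_X_le, natDegree_X_pow]
    · simp
  have hXb : ((X + 1 : (ZMod 2)[X]) ^ b).natDegree ≤ b := by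
    refine le_trans natDegree_pow_le ?_
    calc b * (X + 1 : (ZMod 2)[X]).natDegree ≤ b * 1 := Nat.mul_le_mul_left b hXp1deg
      _ = b := by omega
  have hπc : ((X ^ 2 + X + 1 : (ZMod 2)[X]) ^ c).natDegree ≤ 2 * c := by
    refine le_trans natDegree_pow_le ?_
    calc c * (X ^ 2 + X + 1 : (ZMod 2)[X]).natDegree ≤ c * 2 := Nat.mul_le_mul_left c hquaddeg
      _ = 2 * c := by omega
  have hbound1 : ((X + 1 : (ZMod 2)[X]) ^ b * (X ^ 2 + X + 1) ^ c).natDegree ≤ b + 2 * c :=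
    le_trans natDegree_mul_le (Nat.add_le_add hXb hπc)
  -- reflect computation
  have hrefl : Q.reflect (a + b + 2 * c)
      = X ^ (a + b + 2 * c) + (X + 1) ^ b * (X ^ 2 + X + 1) ^ c := by
    rw [hQ, reflect_add]
    congr 1
    · simpa using reflect_C (1 : ZMod 2) (a + b + 2 * c)
    · rw [mul_assoc, show a + b + 2 * c = a + (b + 2 * c) by ring,
        reflect_mul _ _ (natDegree_X_pow a).le hbound1,
        reflect_mul _ _ hXb hπc, reflect_monomial, revAt_le (le_refl a), Nat.sub_self,
        pow_zero]
      have e1 : ((X + 1 : (ZMod 2)[X]) ^ b).reflect b = (X + 1) ^ b := by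
        simpa using reflect_pow_self (X + 1 : (ZMod 2)[X]) 1 hXp1deg reflect_X_add_one b
      have e2 : ((X ^ 2 + X + 1 : (ZMod 2)[X]) ^ c).reflect (2 * c) = (X ^ 2 + X + 1) ^ c :=
        reflect_pow_self _ 2 hquaddeg reflect_quad c
      rw [e1, e2, one_mul]
  rw [hrefl, hQ] at hstar
  -- the key identity
  have E : ((X : (ZMod 2)[X]) ^ a + 1) * ((X + 1) ^ b * (X ^ 2 + X + 1) ^ c)
      = X ^ (a + b + 2 * c) + 1 := by
    linear_combination hstar
      + ((X : (ZMod 2)[X]) ^ a * (X + 1) ^ b * (X ^ 2 + X + 1) ^ c - X ^ (a + b + 2 * c)) * two2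
  -- map to GF(4)
  have EF : ((X : (GaloisField 2 2)[X]) ^ a + 1) * ((X + 1) ^ b * (X ^ 2 + X + 1) ^ c)
      = X ^ (a + b + 2 * c) + 1 := by
    have h := congrArg (Polynomial.map (algebraMap (ZMod 2) (GaloisField 2 2))) E
    simpa using h
  -- 2-adic decompositions
  set α := a.factorization 2 with hα
  set A := a / 2 ^ α with hAdef
  have haA : 2 ^ α * A = a := Nat.ordProj_mul_ordCompl_eq_self a 2
  have hAodd : Odd A := Nat.odd_iff.mpr (Nat.two_dvd_ne_zero.mp (Nat.not_dvd_ordCompl Nat.prime_two ha.ne'))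
  set N := a + b + 2 * c with hNdef
  have hN0 : N ≠ 0 := by omega
  set τ := N.factorization 2 with hτ
  set M := N / 2 ^ τ with hMdef
  have hNM : 2 ^ τ * M = N := Nat.ordProj_mul_ordCompl_eq_self N 2
  have hModd : Odd M := Nat.odd_iff.mpr (Nat.two_dvd_ne_zero.mp (Nat.not_dvd_ordCompl Nat.prime_two hN0))
  have hA0 : 0 < A := hAodd.pos
  have hM0 : 0 < M := hModd.pos
  -- nonzeroness in GF(4)[X]
  obtain ⟨ω, hω1, hω3⟩ := exists_omega
  have hωord : orderOf ω = 3 := orderOf_eq_prime hω3 hω1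
  have hXane : ((X : (GaloisField 2 2)[X]) ^ a + 1) ≠ 0 := xpow_add_one_ne_zero a ha
  have hX1ne : (X + 1 : (GaloisField 2 2)[X]) ≠ 0 := by
    intro h0
    have h := congrArg (eval 0) h0
    simp at h
  have hπne : (X ^ 2 + X + 1 : (GaloisField 2 2)[X]) ≠ 0 := by
    intro h0
    have h := congrArg (eval 0) h0
    simp at h
  have rmmul : ∀ z : GaloisField 2 2,
      rootMultiplicity z ((X : (GaloisField 2 2)[X]) ^ a + 1)
        + (rootMultiplicity z ((X + 1 : (GaloisField 2 2)[X]) ^ b)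
          + rootMultiplicity z ((X ^ 2 + X + 1 : (GaloisField 2 2)[X]) ^ c))
      = rootMultiplicity z ((X : (GaloisField 2 2)[X]) ^ (a + b + 2 * c) + 1) := by
    intro z
    rw [← rootMultiplicity_mul (mul_ne_zero (pow_ne_zero b hX1ne) (pow_ne_zero c hπne)),
      ← rootMultiplicity_mul (mul_ne_zero hXane (mul_ne_zero (pow_ne_zero b hX1ne) (pow_ne_zero c hπne))),
      EF]
  -- multiplicities at z = 1
  have m1a : rootMultiplicity (1 : GaloisField 2 2) ((X : (GaloisField 2 2)[X]) ^ a + 1) = 2 ^ α := by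
    have h := rm_X_pow (K := GaloisField 2 2) α A hAodd 1
    rw [one_pow, if_pos rfl, haA] at h
    exact h
  have m1b : rootMultiplicity (1 : GaloisField 2 2) ((X + 1 : (GaloisField 2 2)[X]) ^ b) = b := by
    have hX1 : (X + 1 : (GaloisField 2 2)[X]) = X - C 1 := by
      rw [map_one, CharTwo.sub_eq_add]
    rw [hX1, rootMultiplicity_X_sub_C_pow]
  have hevalπ1 : ¬ IsRoot (X ^ 2 + X + 1 : (GaloisField 2 2)[X]) 1 := by
    simp only [IsRoot, eval_add, eval_pow, eval_X, eval_one, one_pow]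
    rw [CharTwo.add_self_eq_zero, zero_add]
    exact one_ne_zero
  have m1c : rootMultiplicity (1 : GaloisField 2 2) ((X ^ 2 + X + 1 : (GaloisField 2 2)[X]) ^ c) = 0 := by
    rw [rm_pow hπne, rootMultiplicity_eq_zero hevalπ1, mul_zero]
  have m1N : rootMultiplicity (1 : GaloisField 2 2) ((X : (GaloisField 2 2)[X]) ^ (a + b + 2 * c) + 1) = 2 ^ τ := by
    have h := rm_X_pow (K := GaloisField 2 2) τ M hModd 1
    rw [one_pow, if_pos rfl, hNM] at h
    exact h
  have F3 : 2 ^ α + b = 2 ^ τ := by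
    have h := rmmul 1
    rw [m1a, m1b, m1c, m1N] at h
    omega
  -- multiplicities at z = ω
  have twoF : (2 : (GaloisField 2 2)[X]) = 0 := two_eq_zero'
  have hωsum : ω ^ 2 + ω + 1 = 0 := by
    have hfac : (ω - 1) * (ω ^ 2 + ω + 1) = ω ^ 3 - 1 := by ring
    have h30 : ω ^ 3 - 1 = 0 := by rw [hω3, sub_self]
    rcases mul_eq_zero.mp (hfac.trans h30) with h | h
    · exact absurd (sub_eq_zero.mp h) hω1
    · exact h
  have mωa : rootMultiplicity ω ((X : (GaloisField 2 2)[X]) ^ a + 1)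
      = if 3 ∣ A then 2 ^ α else 0 := by
    have h := rm_X_pow (K := GaloisField 2 2) α A hAodd ω
    rw [haA] at h
    rw [h]
    by_cases h3 : 3 ∣ A
    · rw [if_pos h3, if_pos (by rw [← hωord] at h3; exact orderOf_dvd_iff_pow_eq_one.mp h3)]
    · rw [if_neg h3, if_neg (fun hpow => h3 (by rw [← hωord]; exact orderOf_dvd_iff_pow_eq_one.mpr hpow))]
  have mωb : rootMultiplicity ω ((X + 1 : (GaloisField 2 2)[X]) ^ b) = 0 := by
    rw [rm_pow hX1ne, rootMultiplicity_eq_zero, mul_zero]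
    simp only [IsRoot, eval_add, eval_X, eval_one]
    intro h0
    exact hω1 (by rw [← CharTwo.neg_eq 1]; exact eq_neg_of_add_eq_zero_left h0)
  have hπfac : (X ^ 2 + X + 1 : (GaloisField 2 2)[X]) = (X - C ω) * (X - C (ω + 1)) := by
    have hc : (C ω) ^ 2 + C ω + 1 = (0 : (GaloisField 2 2)[X]) := by
      have h := congrArg (C : GaloisField 2 2 →+* (GaloisField 2 2)[X]).toFun hωsum
      simpa using h
    rw [map_add, map_one]
    linear_combination (-1 : (GaloisField 2 2)[X]) * hc + (X + C ω * X + 1) * twoF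
  have mωc : rootMultiplicity ω ((X ^ 2 + X + 1 : (GaloisField 2 2)[X]) ^ c) = c := by
    rw [rm_pow hπne]
    have h2 : rootMultiplicity ω ((X - C (ω + 1)) : (GaloisField 2 2)[X]) = 0 := by
      rw [rootMultiplicity_eq_zero]
      simp only [IsRoot, eval_sub, eval_X, eval_C]
      intro h0
      have : ω - (ω + 1) = -1 := by ring
      rw [this] at h0
      exact one_ne_zero (neg_eq_zero.mp h0)
    rw [hπfac, rootMultiplicity_mul (by rw [← hπfac]; exact hπne),
      rootMultiplicity_X_sub_C_self, h2]
    omega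
  have mωN : rootMultiplicity ω ((X : (GaloisField 2 2)[X]) ^ (a + b + 2 * c) + 1)
      = if 3 ∣ M then 2 ^ τ else 0 := by
    have h := rm_X_pow (K := GaloisField 2 2) τ M hModd ω
    rw [hNM] at h
    rw [h]
    by_cases h3 : 3 ∣ M
    · rw [if_pos h3, if_pos (by rw [← hωord] at h3; exact orderOf_dvd_iff_pow_eq_one.mp h3)]
    · rw [if_neg h3, if_neg (fun hpow => h3 (by rw [← hωord]; exact orderOf_dvd_iff_pow_eq_one.mpr hpow))]
  have F4' := rmmul ω
  rw [mωa, mωb, mωc, mωN] at F4'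
  have h3M : 3 ∣ M := by
    by_contra h3
    rw [if_neg h3] at F4'
    omega
  rw [if_pos h3M] at F4'
  -- divisibility of exponents
  have haN : a ∣ N := exp_dvd_of_dvd ha ⟨_, E.symm⟩
  have hAM : A ∣ M := by
    have hcop2 : Nat.Coprime 2 A := (Nat.Prime.coprime_iff_not_dvd Nat.prime_two).mpr
      (Nat.two_dvd_ne_zero.mpr (Nat.odd_iff.mp hAodd))
    have hcop : Nat.Coprime A (2 ^ τ) := Nat.Coprime.pow_right τ hcop2.symm
    have hdvd : A ∣ 2 ^ τ * M := by
      rw [hNM]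
      exact dvd_trans (Dvd.intro_left (2 ^ α) haA) haN
    exact Nat.Coprime.dvd_of_dvd_mul_left hcop hdvd
  have hτα : α < τ := by
    rw [← Nat.pow_lt_pow_iff_right (by norm_num : 1 < 2)]
    omega
  -- the squarefree argument: M divides 3
  have hfa : ((X : (ZMod 2)[X]) ^ a + 1) = ((X : (ZMod 2)[X]) ^ A + 1) ^ 2 ^ α := by
    rw [← haA, xpow_factor]
  have hfN : ((X : (ZMod 2)[X]) ^ N + 1) = ((X : (ZMod 2)[X]) ^ M + 1) ^ 2 ^ τ := by
    rw [← hNM, xpow_factor]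
  obtain ⟨w, hw⟩ := dvd_of_exp_dvd (K := ZMod 2) hAM
  have hAne : ((X : (ZMod 2)[X]) ^ A + 1) ≠ 0 := xpow_add_one_ne_zero A hA0
  have hMne : ((X : (ZMod 2)[X]) ^ M + 1) ≠ 0 := xpow_add_one_ne_zero M hM0
  have hcancel : (X + 1 : (ZMod 2)[X]) ^ b * (X ^ 2 + X + 1) ^ c
      = w ^ 2 ^ α * ((X : (ZMod 2)[X]) ^ M + 1) ^ (2 ^ τ - 2 ^ α) := by
    apply mul_left_cancel₀ (pow_ne_zero (2 ^ α) hAne)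
    calc ((X : (ZMod 2)[X]) ^ A + 1) ^ 2 ^ α * ((X + 1) ^ b * (X ^ 2 + X + 1) ^ c)
        = X ^ N + 1 := by rw [← hfa]; exact E
      _ = ((X : (ZMod 2)[X]) ^ M + 1) ^ 2 ^ τ := hfN
      _ = (((X : (ZMod 2)[X]) ^ A + 1) * w) ^ 2 ^ α * ((X : (ZMod 2)[X]) ^ M + 1) ^ (2 ^ τ - 2 ^ α) := by
          rw [← hw, ← pow_add]
          congr 1
          have h1 : 2 ^ α ≤ 2 ^ τ := Nat.pow_le_pow_right (by norm_num) hτα.le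
          omega
      _ = ((X : (ZMod 2)[X]) ^ A + 1) ^ 2 ^ α
            * (w ^ 2 ^ α * ((X : (ZMod 2)[X]) ^ M + 1) ^ (2 ^ τ - 2 ^ α)) := by
          rw [mul_pow]; ring
  have hMdvdS : ((X : (ZMod 2)[X]) ^ M + 1) ∣ (X + 1 : (ZMod 2)[X]) ^ b * (X ^ 2 + X + 1) ^ c := by
    rw [hcancel]
    have hpos : 2 ^ τ - 2 ^ α ≠ 0 := by
      have h1 : 2 ^ α < 2 ^ τ := by omega
      omega
    exact Dvd.dvd.mul_left (dvd_pow_self _ hpos) _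
  have hX3 : ((X : (ZMod 2)[X]) + 1) ∣ X ^ 3 + 1 := by
    refine ⟨X ^ 2 + X + 1, ?_⟩
    linear_combination (-(X : (ZMod 2)[X]) ^ 2 - X) * two2
  have hπ3 : ((X : (ZMod 2)[X]) ^ 2 + X + 1) ∣ X ^ 3 + 1 := by
    refine ⟨X + 1, ?_⟩
    linear_combination (-(X : (ZMod 2)[X]) ^ 2 - X) * two2
  have hS3 : ((X : (ZMod 2)[X]) ^ M + 1) ∣ ((X : (ZMod 2)[X]) ^ 3 + 1) ^ (b + c) := by
    refine hMdvdS.trans ?_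
    rw [pow_add]
    exact mul_dvd_mul (pow_dvd_pow_of_dvd hX3 b) (pow_dvd_pow_of_dvd hπ3 c)
  have hsqf : Squarefree ((X : (ZMod 2)[X]) ^ M + 1) := by
    rw [xp1]
    have hcast : (M : ZMod 2) ≠ 0 := by
      intro hc0
      exact (Nat.not_even_iff_odd.mpr hModd)
        (even_iff_two_dvd.mpr ((CharP.cast_eq_zero_iff (ZMod 2) 2 M).mp hc0))
    exact (separable_X_pow_sub_C 1 hcast one_ne_zero).squarefree
  have hM3 : M ∣ 3 :=
    exp_dvd_of_dvd hM0 ((hsqf.dvd_pow_iff_dvd (by omega : b + c ≠ 0)).mp hS3)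
  have hMeq3 : M = 3 := Nat.dvd_antisymm hM3 h3M
  -- arithmetic endgame
  have hNval : a + b + 2 * c = 2 ^ τ * 3 := by rw [← hNdef, ← hNM, hMeq3]
  have hτpos : 0 < τ := by
    rcases Nat.eq_zero_or_pos τ with h0 | h
    · rw [h0] at F3; simp at F3; omega
    · exact h
  have h2α : 0 < 2 ^ α := pow_pos (by norm_num) α
  have h2ατ : 2 ^ α < 2 ^ τ := by omega
  by_cases h3A : 3 ∣ A
  · -- a = 3 case
    rw [if_pos h3A] at F4'
    have hbc : b = c := by omega
    have hgcd2 : Nat.gcd a b = 1 := by rw [← hbc, Nat.gcd_self] at hgcd; exact hgcd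
    have hdvd1 : 2 ^ α ∣ a := ⟨A, haA.symm⟩
    have hdvd2 : 2 ^ α ∣ b := by
      have h2 : 2 ^ α ∣ 2 ^ τ := pow_dvd_pow 2 hτα.le
      have : b = 2 ^ τ - 2 ^ α := by omega
      rw [this]
      exact Nat.dvd_sub h2 dvd_rfl
    have hα0 : α = 0 := by
      have h1 : 2 ^ α ∣ 1 := hgcd2 ▸ Nat.dvd_gcd hdvd1 hdvd2
      have h2 : 2 ^ α = 1 := Nat.eq_one_of_dvd_one h1
      by_contra hne0
      have : 2 ≤ 2 ^ α := by
        calc 2 = 2 ^ 1 := (pow_one 2).symm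
          _ ≤ 2 ^ α := Nat.pow_le_pow_right (by norm_num) (by omega)
      omega
    rw [hα0, pow_zero] at F3 F4'
    refine ⟨τ, hτpos, Or.inr ⟨by omega, by omega, by omega⟩⟩
  · -- a = 1 case
    rw [if_neg h3A] at F4'
    have hceq : c = 2 ^ τ := by omega
    have haeq : a = 2 ^ α := by omega
    have hα0 : α = 0 := by
      by_contra hne0
      have h2a : 2 ∣ a := by
        rw [haeq]
        exact dvd_pow_self 2 (by omega)
      have h2c : 2 ∣ c := by
        rw [hceq]
        exact dvd_pow_self 2 (by omega)
      have h2α' : 2 ∣ 2 ^ α := dvd_pow_self 2 (by omega)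
      have h2τ' : 2 ∣ 2 ^ τ := dvd_pow_self 2 (by omega)
      have h2b : 2 ∣ b := by omega
      have : 2 ∣ Nat.gcd a (Nat.gcd b c) := Nat.dvd_gcd h2a (Nat.dvd_gcd h2b h2c)
      omega
    rw [hα0, pow_zero] at F3 haeq
    refine ⟨τ, hτpos, Or.inl ⟨by omega, by omega, by omega⟩⟩
end

section
/- Let Q = 1 + x^a(x+1)^b(x^2+x+1)^c ∈ F_2[x] with a, b, c positive integers, a and b both odd, and suppose Q*(x) = x^{a+b+2c} Q(1/x) = 1 + x^d(x+1)^e for positive integers d, e. Then a = c = 1, d = 3, and b = e = 2^r − 3 for some integer r ≥ 2. -/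
open Polynomial

section Helpers

lemma rm_reflect_self_pow {R : Type*} [CommSemiring R] (p : R[X]) (k : ℕ)
    (hd : p.natDegree ≤ k) (hp : reflect k p = p) (m : ℕ) :
    reflect (k * m) (p ^ m) = p ^ m := by
  induction m with
  | zero => simp
  | succ m ih =>
      have h1 : (p ^ m).natDegree ≤ k * m :=
        le_trans natDegree_pow_le
          (le_trans (Nat.mul_le_mul_left m hd) (le_of_eq (Nat.mul_comm m k)))
      calc reflect (k * (m+1)) (p ^ (m+1))
          = reflect (k * m + k) (p ^ m * p) := by ring_nf
        _ = reflect (k * m) (p ^ m) * reflect k p := reflect_mul _ _ h1 hd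
        _ = p ^ (m+1) := by rw [ih, hp]; ring

lemma rm_ndeg_xa1 : ((X:(ZMod 2)[X]) + 1).natDegree = 1 := by
  simpa using natDegree_X_add_C (1 : ZMod 2)

lemma rm_ndeg_phi : ((X:(ZMod 2)[X])^2 + X + 1).natDegree = 2 := by
  compute_degree!

lemma rm_xa1_ne : ((X:(ZMod 2)[X]) + 1) ≠ 0 := by
  intro h
  have := rm_ndeg_xa1
  rw [h] at this
  simp at this

lemma rm_phi_ne : ((X:(ZMod 2)[X])^2 + X + 1) ≠ 0 := by
  intro h
  have := rm_ndeg_phi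
  rw [h] at this
  simp at this

lemma rm_refl1 : reflect 1 ((X:(ZMod 2)[X]) + 1) = X + 1 := by
  rw [reflect_add, ← C_1, reflect_C, ← pow_one (X:(ZMod 2)[X]), reflect_monomial]
  simp [revAt_le]; ring

lemma rm_refl2 : reflect 2 ((X:(ZMod 2)[X])^2 + X + 1) = X^2 + X + 1 := by
  rw [reflect_add, reflect_add, ← C_1, reflect_C, reflect_monomial,
    ← pow_one (X:(ZMod 2)[X]), reflect_monomial]
  simp [revAt_le]; ring

lemma rm_reflectQ (a b c : ℕ) :
    reflect (a + b + 2 * c) (1 + X ^ a * (X + 1) ^ b * ((X:(ZMod 2)[X]) ^ 2 + X + 1) ^ c)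
    = X ^ (a + b + 2 * c) + (X + 1) ^ b * (X ^ 2 + X + 1) ^ c := by
  have hb : (((X:(ZMod 2)[X]) + 1) ^ b).natDegree ≤ b := by
    refine le_trans natDegree_pow_le ?_
    rw [rm_ndeg_xa1]; omega
  have hphic : ((((X:(ZMod 2)[X])) ^ 2 + X + 1) ^ c).natDegree ≤ 2 * c := by
    refine le_trans natDegree_pow_le ?_
    rw [rm_ndeg_phi]; omega
  have hab : ((X:(ZMod 2)[X]) ^ a * (X + 1) ^ b).natDegree ≤ a + b :=
    le_trans (natDegree_mul_le) (by simp only [natDegree_X_pow]; omega)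
  rw [reflect_add]
  have h1 : reflect (a + b + 2*c) (1 : (ZMod 2)[X]) = X ^ (a+b+2*c) := by
    rw [← C_1, reflect_C]; simp
  rw [h1]
  have h2 : reflect (a + b + 2*c) ((X:(ZMod 2)[X]) ^ a * (X + 1) ^ b * (X ^ 2 + X + 1) ^ c)
      = reflect (a+b) ((X:(ZMod 2)[X]) ^ a * (X + 1) ^ b) * reflect (2*c) ((X ^ 2 + X + 1) ^ c) :=
    reflect_mul _ _ hab hphic
  rw [h2, reflect_mul _ _ (le_of_eq (natDegree_X_pow a)) hb, reflect_monomial]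
  have h3 : reflect b (((X:(ZMod 2)[X]) + 1) ^ b) = (X + 1) ^ b := by
    have := rm_reflect_self_pow ((X:(ZMod 2)[X]) + 1) 1 (le_of_eq rm_ndeg_xa1) rm_refl1 b
    simpa using this
  have h4 : reflect (2*c) ((((X:(ZMod 2)[X])) ^ 2 + X + 1) ^ c) = (X ^ 2 + X + 1) ^ c :=
    rm_reflect_self_pow _ 2 (le_of_eq rm_ndeg_phi) rm_refl2 c
  rw [h3, h4, revAt_le (le_refl a)]
  simp

lemma rm_two_eq_zero_poly : (2 : (ZMod 2)[X]) = 0 := by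
  exact_mod_cast CharP.cast_eq_zero ((ZMod 2)[X]) 2

lemma rm_sq_X_add_one : ((X : (ZMod 2)[X]) + 1) ^ 2 = X ^ 2 + 1 := by
  have h : ((X : (ZMod 2)[X]) + 1) ^ 2 = X ^ 2 + 2 * X + 1 := by ring
  rw [h, rm_two_eq_zero_poly]; ring

lemma rm_natCast_odd (n : ℕ) (hodd : Odd n) : (n : ZMod 2) = 1 := by
  rw [Nat.odd_iff] at hodd
  rw [← ZMod.natCast_mod n 2, hodd, Nat.cast_one]

lemma rm_natCast_even (n : ℕ) (hev : Even n) : (n : ZMod 2) = 0 := by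
  rw [Nat.even_iff] at hev
  rw [← ZMod.natCast_mod n 2, hev, Nat.cast_zero]

lemma rm_pow2_of_eq (n : ℕ) (hn : 0 < n) (h : ((X:(ZMod 2)[X]) + 1) ^ n = X ^ n + 1) :
    ∃ r : ℕ, n = 2 ^ r := by
  induction n using Nat.strong_induction_on with
  | _ n ih =>
    rcases Nat.even_or_odd n with hev | hodd
    · obtain ⟨m, hm⟩ := hev
      have hm2 : n = 2 * m := by omega
      have hmpos : 0 < m := by omega
      have hlt : m < n := by omega
      have hexp : (expand (ZMod 2) 2) ((X + 1 : (ZMod 2)[X]) ^ m) =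
          (expand (ZMod 2) 2) (X ^ m + 1) := by
        have e1 : (expand (ZMod 2) 2) ((X + 1 : (ZMod 2)[X]) ^ m)
            = ((X:(ZMod 2)[X]) ^ 2 + 1) ^ m := by
          rw [map_pow, map_add, expand_X, map_one]
        have e2 : (expand (ZMod 2) 2) ((X:(ZMod 2)[X]) ^ m + 1) = X ^ n + 1 := by
          rw [map_add, map_pow, expand_X, map_one, ← pow_mul, hm2, Nat.mul_comm]
        have e3 : ((X:(ZMod 2)[X]) ^ 2 + 1) ^ m = (X + 1) ^ n := by
          rw [← rm_sq_X_add_one, ← pow_mul, hm2, Nat.mul_comm]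
        rw [e1, e2, e3, h]
      have hinj := expand_injective (R := ZMod 2) (n := 2) (by norm_num) hexp
      obtain ⟨r, hr⟩ := ih m hlt hmpos hinj
      exact ⟨r + 1, by rw [hm2, hr, pow_succ, Nat.mul_comm]⟩
    · rcases eq_or_lt_of_le (Nat.succ_le_of_lt hn) with h1 | h1
      · exact ⟨0, by omega⟩
      · exfalso
        have hc := congrArg (fun p => Polynomial.coeff p (n - 1)) h
        simp only [coeff_X_add_one_pow, coeff_add, coeff_X_pow, coeff_one] at hc
        rw [if_neg (by omega), if_neg (by omega)] at hc
        have hs : n.choose (n - 1) = n := by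
          have := Nat.choose_symm (n := n) (k := 1) (by omega)
          simpa [Nat.choose_one_right] using this
        rw [hs, rm_natCast_odd n hodd] at hc
        norm_num at hc

lemma rm_dX1 : derivative ((X:(ZMod 2)[X]) + 1) = 1 := by simp

lemma rm_dPhi : derivative ((X:(ZMod 2)[X])^2 + X + 1) = 1 := by
  rw [derivative_add, derivative_add, derivative_X_pow, derivative_X, derivative_one]
  rw [show ((2:ℕ) : ZMod 2) = 0 from rfl]
  simp

lemma rm_rm0_X_pow (k : ℕ) : rootMultiplicity (0 : ZMod 2) ((X:(ZMod 2)[X]) ^ k) = k := by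
  have := rootMultiplicity_X_sub_C_pow (R := ZMod 2) 0 k
  simpa using this

lemma rm_X_sub_one : (X - C (1:ZMod 2)) = X + 1 := by
  have h : (-(1 : ZMod 2)) = 1 := rfl
  rw [sub_eq_add_neg, ← C_neg, h, C_1]

lemma rm_rm1_X1_pow (k : ℕ) : rootMultiplicity (1 : ZMod 2) (((X:(ZMod 2)[X]) + 1) ^ k) = k := by
  have := rootMultiplicity_X_sub_C_pow (R := ZMod 2) 1 k
  rwa [rm_X_sub_one] at this

lemma rm_rm0_X1_pow (k : ℕ) : rootMultiplicity (0 : ZMod 2) (((X:(ZMod 2)[X]) + 1) ^ k) = 0 := by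
  apply rootMultiplicity_eq_zero
  simp [IsRoot, eval_pow]

lemma rm_rm1_X_pow (k : ℕ) : rootMultiplicity (1 : ZMod 2) ((X:(ZMod 2)[X]) ^ k) = 0 := by
  apply rootMultiplicity_eq_zero
  simp [IsRoot]

lemma rm_rm0_phi_pow (k : ℕ) :
    rootMultiplicity (0 : ZMod 2) (((X:(ZMod 2)[X])^2 + X + 1) ^ k) = 0 := by
  apply rootMultiplicity_eq_zero
  simp [IsRoot, eval_pow]

lemma rm_rm1_phi_pow (k : ℕ) :
    rootMultiplicity (1 : ZMod 2) (((X:(ZMod 2)[X])^2 + X + 1) ^ k) = 0 := by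
  apply rootMultiplicity_eq_zero
  intro h
  simp only [IsRoot, eval_pow, eval_add, eval_one, eval_X, eval_pow] at h
  rw [show ((1:ZMod 2)^2 + 1 + 1 : ZMod 2) = 1 from rfl] at h
  simpa using h

lemma rm_factor_eq (B C D E k : ℕ)
    (h : ((X:(ZMod 2)[X]) + 1) ^ B * (X ^ 2 + X + 1) ^ C * X ^ k
       = X ^ D * (X + 1) ^ E) :
    D = k ∧ E = B ∧ C = 0 := by
  have hX1p : ∀ m : ℕ, ((X:(ZMod 2)[X]) + 1) ^ m ≠ 0 := fun m => pow_ne_zero m rm_xa1_ne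
  have hPhip : ∀ m : ℕ, (((X:(ZMod 2)[X]))^2 + X + 1) ^ m ≠ 0 := fun m => pow_ne_zero m rm_phi_ne
  have hXp : ∀ m : ℕ, ((X:(ZMod 2)[X])) ^ m ≠ 0 := fun m => pow_ne_zero m X_ne_zero
  have hne1 : ((X:(ZMod 2)[X]) + 1) ^ B * (X ^ 2 + X + 1) ^ C ≠ 0 :=
    mul_ne_zero (hX1p B) (hPhip C)
  have hneL : ((X:(ZMod 2)[X]) + 1) ^ B * (X ^ 2 + X + 1) ^ C * X ^ k ≠ 0 :=
    mul_ne_zero hne1 (hXp k)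
  have hneR : ((X:(ZMod 2)[X])) ^ D * (X + 1) ^ E ≠ 0 := mul_ne_zero (hXp D) (hX1p E)
  have h0 := congrArg (rootMultiplicity (0 : ZMod 2)) h
  rw [rootMultiplicity_mul hneL, rootMultiplicity_mul hne1, rootMultiplicity_mul hneR,
    rm_rm0_X1_pow, rm_rm0_phi_pow, rm_rm0_X_pow, rm_rm0_X_pow, rm_rm0_X1_pow] at h0
  have h1 := congrArg (rootMultiplicity (1 : ZMod 2)) h
  rw [rootMultiplicity_mul hneL, rootMultiplicity_mul hne1, rootMultiplicity_mul hneR,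
    rm_rm1_X1_pow, rm_rm1_phi_pow, rm_rm1_X_pow, rm_rm1_X_pow, rm_rm1_X1_pow] at h1
  have hdeg := congrArg natDegree h
  rw [natDegree_mul hne1 (hXp k), natDegree_mul (hX1p B) (hPhip C),
    natDegree_mul (hXp D) (hX1p E)] at hdeg
  simp only [natDegree_pow, rm_ndeg_xa1, rm_ndeg_phi, natDegree_X] at hdeg
  omega

end Helpers

theorem reciprocal_mersenne_odd_odd (a b c d e : ℕ)
    (ha : 0 < a) (hb : 0 < b) (hc : 0 < c) (hd : 0 < d) (he : 0 < e)
    (hoa : Odd a) (hob : Odd b)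
    (Q : Polynomial (ZMod 2))
    (hQ : Q = 1 + X ^ a * (X + 1) ^ b * (X ^ 2 + X + 1) ^ c)
    (hstar : Q.reflect (a + b + 2 * c) = 1 + X ^ d * (X + 1) ^ e) :
    a = 1 ∧ c = 1 ∧ d = 3 ∧ ∃ r : ℕ, 2 ≤ r ∧ b = 2 ^ r - 3 ∧ e = 2 ^ r - 3 := by
  have hE : (X:(ZMod 2)[X]) ^ (a + b + 2 * c) + (X + 1) ^ b * (X ^ 2 + X + 1) ^ c
      = 1 + X ^ d * (X + 1) ^ e := by
    rw [← rm_reflectQ a b c, ← hQ]; exact hstar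
  have hX1p : ∀ k : ℕ, ((X:(ZMod 2)[X]) + 1) ^ k ≠ 0 := fun k => pow_ne_zero k rm_xa1_ne
  have hPhip : ∀ k : ℕ, (((X:(ZMod 2)[X]))^2 + X + 1) ^ k ≠ 0 := fun k => pow_ne_zero k rm_phi_ne
  have hXp : ∀ k : ℕ, ((X:(ZMod 2)[X])) ^ k ≠ 0 := fun k => pow_ne_zero k X_ne_zero
  -- n = d + e
  have hnde : a + b + 2 * c = d + e := by
    have hL : ((X:(ZMod 2)[X]) ^ (a+b+2*c) + (X + 1) ^ b * (X ^ 2 + X + 1) ^ c).natDegree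
        = a + b + 2*c := by
      rw [natDegree_add_eq_left_of_natDegree_lt]
      · exact natDegree_X_pow _
      · rw [natDegree_X_pow, natDegree_mul (hX1p b) (hPhip c), natDegree_pow, natDegree_pow,
          rm_ndeg_xa1, rm_ndeg_phi]
        omega
    have hR : ((1 : (ZMod 2)[X]) + X ^ d * (X + 1) ^ e).natDegree = d + e := by
      rw [natDegree_add_eq_right_of_natDegree_lt]
      · rw [natDegree_mul (hXp d) (hX1p e), natDegree_pow, natDegree_pow,
          natDegree_X, rm_ndeg_xa1]; omega
      · rw [natDegree_one, natDegree_mul (hXp d) (hX1p e), natDegree_pow, natDegree_pow,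
          natDegree_X, rm_ndeg_xa1]; omega
    rw [← hL, hE, hR]
  have hne : Even (a + b + 2 * c) := by
    rcases hoa with ⟨a', ha'⟩; rcases hob with ⟨b', hb'⟩
    exact ⟨a' + b' + 1 + c, by omega⟩
  -- derivative of hE
  have hD := congrArg derivative hE
  rw [derivative_add, derivative_add, derivative_one, derivative_X_pow,
    rm_natCast_even _ hne, derivative_mul, derivative_mul,
    derivative_pow ((X:(ZMod 2)[X]) + 1) b, derivative_pow, derivative_pow, derivative_pow,
    rm_dX1, rm_dPhi, derivative_X, rm_natCast_odd b hob] at hD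
  simp only [map_zero, zero_mul, zero_add, mul_one, C_1, one_mul] at hD
  have hde_par : ((e : ℕ) : ZMod 2) = ((d : ℕ) : ZMod 2) := by
    rcases Nat.even_or_odd d with hdp | hdp
    · have hep : Even e := by
        rw [Nat.even_iff] at hne hdp ⊢; omega
      rw [rm_natCast_even d hdp, rm_natCast_even e hep]
    · have hep : Odd e := by
        rw [Nat.even_iff] at hne; rw [Nat.odd_iff] at hdp ⊢; omega
      rw [rm_natCast_odd d hdp, rm_natCast_odd e hep]
  rw [hde_par] at hD
  obtain ⟨b', rfl⟩ : ∃ b', b = b' + 1 := ⟨b - 1, (Nat.succ_pred_eq_of_pos hb).symm⟩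
  obtain ⟨c', rfl⟩ : ∃ c', c = c' + 1 := ⟨c - 1, (Nat.succ_pred_eq_of_pos hc).symm⟩
  obtain ⟨d', rfl⟩ : ∃ d', d = d' + 1 := ⟨d - 1, (Nat.succ_pred_eq_of_pos hd).symm⟩
  obtain ⟨e', rfl⟩ : ∃ e', e = e' + 1 := ⟨e - 1, (Nat.succ_pred_eq_of_pos he).symm⟩
  simp only [Nat.add_sub_cancel] at hD
  have hD2 : ((X:(ZMod 2)[X]) + 1) ^ b' * (X ^ 2 + X + 1) ^ c'
        * ((X ^ 2 + X + 1) + C (((c' + 1 : ℕ)) : ZMod 2) * (X + 1))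
      = C (((d' + 1 : ℕ)) : ZMod 2) * (X ^ d' * (X + 1) ^ e') := by
    linear_combination hD + (C (((d' + 1 : ℕ)) : ZMod 2) * X ^ d' * (X + 1) ^ e' * X)
      * rm_two_eq_zero_poly
  clear hD
  -- d must be odd
  have hdodd : Odd (d' + 1) := by
    by_contra hdev
    rw [Nat.not_odd_iff_even] at hdev
    rw [rm_natCast_even _ hdev, map_zero, zero_mul] at hD2
    rcases Nat.even_or_odd (c' + 1) with hcp | hcp
    · rw [rm_natCast_even _ hcp, map_zero, zero_mul, add_zero] at hD2
      exact (mul_ne_zero (mul_ne_zero (hX1p b') (hPhip c')) rm_phi_ne) hD2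
    · rw [rm_natCast_odd _ hcp, C_1, one_mul] at hD2
      have hx2 : ((X:(ZMod 2)[X]) ^ 2 + X + 1) + (X + 1) = X ^ 2 := by
        linear_combination (X + 1 : (ZMod 2)[X]) * rm_two_eq_zero_poly
      rw [hx2] at hD2
      exact (mul_ne_zero (mul_ne_zero (hX1p b') (hPhip c')) (hXp 2)) hD2
  rw [rm_natCast_odd _ hdodd, C_1, one_mul] at hD2
  -- case on parity of c
  have hkey : d' = 2 ∧ e' = b' ∧ c' = 0 := by
    rcases Nat.even_or_odd (c' + 1) with hcp | hcp
    · exfalso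
      rw [rm_natCast_even _ hcp, map_zero, zero_mul, add_zero] at hD2
      have hK : ((X:(ZMod 2)[X]) + 1) ^ b' * (X ^ 2 + X + 1) ^ (c' + 1) * X ^ 0
          = X ^ d' * (X + 1) ^ e' := by
        rw [pow_zero, mul_one, pow_succ, ← mul_assoc]
        exact hD2
      obtain ⟨_, _, hc0⟩ := rm_factor_eq _ _ _ _ _ hK
      omega
    · rw [rm_natCast_odd _ hcp, C_1, one_mul] at hD2
      have hx2 : ((X:(ZMod 2)[X]) ^ 2 + X + 1) + (X + 1) = X ^ 2 := by
        linear_combination (X + 1 : (ZMod 2)[X]) * rm_two_eq_zero_poly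
      rw [hx2] at hD2
      obtain ⟨h1, h2, h3⟩ := rm_factor_eq _ _ _ _ _ hD2
      exact ⟨h1, h2, h3⟩
  obtain ⟨hd2, he2, hc0⟩ := hkey
  subst hd2; subst hc0
  rw [he2] at hE
  -- now c = 1, d = 3, e = b; derive (X+1)^(b+3) = X^n + 1
  have hNF : a + (b' + 1) + 2 * (0 + 1) = a + b' + 3 := by omega
  rw [hNF] at hE
  have hF : ((X:(ZMod 2)[X]) + 1) ^ (b' + 4) = X ^ (a + b' + 3) + 1 := by
    linear_combination (-1 : (ZMod 2)[X]) * hE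
      + ((X + 1) ^ (b' + 1) * (X ^ 2 + X + 1 + X ^ 2 + X) - 1) * rm_two_eq_zero_poly
  have hdegF := congrArg natDegree hF
  rw [natDegree_pow, rm_ndeg_xa1, mul_one, ← C_1, natDegree_X_pow_add_C] at hdegF
  -- so a = 1
  have ha1 : a = 1 := by omega
  have hNN : a + b' + 3 = b' + 4 := by omega
  rw [hNN] at hF
  obtain ⟨r, hr⟩ := rm_pow2_of_eq (b' + 4) (by omega) hF
  have hr2 : 2 ≤ r := by
    by_contra hlt
    push_neg at hlt
    have h21 : (2:ℕ) ^ r ≤ 2 ^ 1 := Nat.pow_le_pow_right (by norm_num) (by omega)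
    rw [← hr] at h21
    omega
  exact ⟨ha1, rfl, rfl, r, hr2, by omega, by omega⟩

-- axiom check
end

section
/- Let B ∈ F_2[x] be perfect (σ(B) = B), divisible by both x and x+1, but not equal to x^a(x+1)^b for any a, b (i.e., B does not split over F_2), and let Q be an irreducible divisor of B with Q(0) ≠ 0 and Q(1) ≠ 0. Then either 1 + Q divides B, or σ(Q^{2h}) divides B for some positive integer h. -/
open Polynomial

namespace SigmaF2Aux

abbrev RR := Polynomial (ZMod 2)

theorem monic_of_ne_zero {p : RR} (hp : p ≠ 0) : p.Monic := by
  have h := mt leadingCoeff_eq_zero.mp hp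
  unfold Monic
  revert h; generalize p.leadingCoeff = c; revert c; decide

theorem unit_eq_one (u : RRˣ) : u = 1 := by
  ext
  obtain ⟨r, hr, h⟩ := Polynomial.isUnit_iff.mp u.isUnit
  have h01 : ∀ c : ZMod 2, c ≠ 0 → c = 1 := by decide
  simp [← h, h01 r hr.ne_zero]

instance : Subsingleton RRˣ := ⟨fun a b => (unit_eq_one a).trans (unit_eq_one b).symm⟩
noncomputable instance : Fintype RRˣ := Fintype.ofSubsingleton 1

theorem eq_of_associated {a b : RR} (h : Associated a b) : a = b := by
  obtain ⟨u, hu⟩ := h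
  rw [unit_eq_one u] at hu
  simpa using hu

theorem eq_of_dvd_dvd {a b : RR} (h1 : a ∣ b) (h2 : b ∣ a) : a = b :=
  eq_of_associated (associated_of_dvd_dvd h1 h2)

theorem divisors_finite {B : RR} (hB : B ≠ 0) : {d : RR | d ∣ B}.Finite := by
  have : Finite {x : RR // x ∣ B} :=
    @Finite.of_fintype _ (UniqueFactorizationMonoid.fintypeSubtypeDvd B hB)
  exact Set.finite_coe_iff.mp this

theorem sigma_eq_sum {B : RR} (hB : B ≠ 0) :
    sigmaF2 B = ∑ d ∈ (divisors_finite hB).toFinset, d := by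
  unfold sigmaF2
  have hset : {d : RR | d.Monic ∧ d ∣ B} = {d : RR | d ∣ B} := by
    ext d
    refine ⟨fun h => h.2, fun h => ⟨monic_of_ne_zero fun h0 => hB ?_, h⟩⟩
    rw [h0] at h; exact zero_dvd_iff.mp h
  rw [hset, finsum_mem_eq_finite_toFinset_sum _ (divisors_finite hB)]

theorem sigma_prime_pow {Q : RR} (hQ : Irreducible Q) (n : ℕ) :
    sigmaF2 (Q ^ n) = ∑ i ∈ Finset.range (n + 1), Q ^ i := by
  have hQp : Prime Q := hQ.prime
  have hQ0 : Q ^ n ≠ 0 := pow_ne_zero n hQp.ne_zero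
  rw [sigma_eq_sum hQ0]
  have hfs : (divisors_finite hQ0).toFinset = (Finset.range (n + 1)).image (Q ^ ·) := by
    ext d
    simp only [Set.Finite.mem_toFinset, Set.mem_setOf_eq, Finset.mem_image, Finset.mem_range]
    constructor
    · intro hd
      obtain ⟨i, hi, ha⟩ := (dvd_prime_pow hQp n).mp hd
      exact ⟨i, Nat.lt_succ_of_le hi, (eq_of_associated ha).symm⟩
    · rintro ⟨i, hi, rfl⟩
      exact pow_dvd_pow Q (Nat.lt_succ_iff.mp hi)
  have hinj : Set.InjOn (Q ^ ·) (Finset.range (n + 1)) := by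
    intro i _ j _ hij
    have hdeg := congrArg natDegree hij
    simp only [natDegree_pow] at hdeg
    exact Nat.eq_of_mul_eq_mul_right hQ.natDegree_pos hdeg
  rw [hfs, Finset.sum_image fun i hi j hj => hinj hi hj]

theorem sigma_mul {A C : RR} (hA : A ≠ 0) (hC : C ≠ 0) (h : IsCoprime A C) :
    sigmaF2 (A * C) = sigmaF2 A * sigmaF2 C := by
  rw [sigma_eq_sum hA, sigma_eq_sum hC, sigma_eq_sum (mul_ne_zero hA hC),
    Finset.sum_mul_sum, ← Finset.sum_product']
  symm
  apply Finset.sum_bij (i := fun (p : RR × RR) _ => p.1 * p.2)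
  · rintro ⟨a, c⟩ hp
    simp only [Finset.mem_product, Set.Finite.mem_toFinset, Set.mem_setOf_eq] at hp ⊢
    exact mul_dvd_mul hp.1 hp.2
  · rintro ⟨a₁, c₁⟩ h₁ ⟨a₂, c₂⟩ h₂ heq
    simp only [Finset.mem_product, Set.Finite.mem_toFinset, Set.mem_setOf_eq] at h₁ h₂
    have hcop₁ : IsCoprime a₁ c₂ := h.of_isCoprime_of_dvd_left h₁.1 |>.of_isCoprime_of_dvd_right h₂.2
    have hcop₂ : IsCoprime a₂ c₁ := h.of_isCoprime_of_dvd_left h₂.1 |>.of_isCoprime_of_dvd_right h₁.2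
    have ha : a₁ = a₂ := by
      apply eq_of_dvd_dvd
      · exact hcop₁.dvd_of_dvd_mul_right ⟨c₁, heq.symm⟩
      · exact hcop₂.dvd_of_dvd_mul_right ⟨c₂, heq⟩
    have ha₁0 : a₁ ≠ 0 := fun h0 => hA (zero_dvd_iff.mp (h0 ▸ h₁.1))
    have hc : c₁ = c₂ := by
      subst ha
      exact mul_left_cancel₀ ha₁0 heq
    rw [Prod.mk.injEq]; exact ⟨ha, hc⟩
  · intro d hd
    simp only [Set.Finite.mem_toFinset, Set.mem_setOf_eq] at hd
    obtain ⟨a, c, ha, hc, rfl⟩ := exists_dvd_and_dvd_of_dvd_mul hd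
    refine ⟨⟨a, c⟩, ?_, rfl⟩
    simp only [Finset.mem_product, Set.Finite.mem_toFinset, Set.mem_setOf_eq]
    exact ⟨ha, hc⟩
  · intros; rfl

theorem geom_dvd (x : RR) (a b : ℕ) :
    (∑ i ∈ Finset.range a, x ^ i) ∣ ∑ i ∈ Finset.range (a * b), x ^ i := by
  induction b with
  | zero => simp
  | succ b ih =>
    rw [Nat.mul_succ, Finset.sum_range_add]
    refine dvd_add ih ?_
    have : ∑ i ∈ Finset.range a, x ^ (a * b + i)
        = x ^ (a * b) * ∑ i ∈ Finset.range a, x ^ i := by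
      rw [Finset.mul_sum]
      exact Finset.sum_congr rfl fun i _ => pow_add x (a * b) i
    rw [this]
    exact Dvd.dvd.mul_left dvd_rfl _

end SigmaF2Aux

open SigmaF2Aux in
theorem odd_prime_divisor_of_perfect (B Q : Polynomial (ZMod 2))
    (hperf : sigmaF2 B = B)
    (hx : (X : Polynomial (ZMod 2)) ∣ B) (hx1 : (X + 1 : Polynomial (ZMod 2)) ∣ B)
    (hsplit : ¬ ∃ a b : ℕ, B = X ^ a * (X + 1) ^ b)
    (hQ : Irreducible Q) (hQB : Q ∣ B)
    (hQ0 : Q.eval 0 ≠ 0) (hQ1 : Q.eval 1 ≠ 0) :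
    (1 + Q) ∣ B ∨ ∃ h : ℕ, 0 < h ∧ (∑ i ∈ Finset.range (2 * h + 1), Q ^ i) ∣ B := by
  by_cases hB0 : B = 0
  · left; rw [hB0]; exact dvd_zero _
  have hQp : Prime Q := hQ.prime
  obtain ⟨n, C, hC, rfl⟩ := WfDvdMonoid.max_power_factor hB0 hQ
  have hC0 : C ≠ 0 := fun h0 => hB0 (by rw [h0, mul_zero])
  have hn1 : 1 ≤ n := by
    by_contra hn
    push_neg at hn
    interval_cases n
    · rw [pow_zero, one_mul] at hQB
      exact hC hQB
  have hcop : IsCoprime (Q ^ n) C := (hQp.coprime_iff_not_dvd.mpr hC).pow_left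
  have hdvd : (∑ i ∈ Finset.range (n + 1), Q ^ i) ∣ Q ^ n * C := by
    conv_rhs => rw [← hperf]
    rw [sigma_mul (pow_ne_zero n hQp.ne_zero) hC0 hcop, sigma_prime_pow hQ]
    exact dvd_mul_right _ _
  obtain ⟨t, s, hs_odd, hns⟩ := Nat.exists_eq_two_pow_mul_odd (Nat.succ_ne_zero n)
  rw [Nat.succ_eq_add_one] at hns
  obtain ⟨h, rfl⟩ := hs_odd
  rcases Nat.eq_zero_or_pos h with rfl | hpos
  · -- s = 1 : n + 1 = 2 ^ t, t ≥ 1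
    left
    have ht : 1 ≤ t := by
      by_contra ht
      push_neg at ht
      interval_cases t
      · simp at hns; omega
    have h2t : n + 1 = 2 * 2 ^ (t - 1) := by
      rw [hns, show 2*0+1 = 1 from rfl, mul_one, ← pow_succ']; congr 1; omega
    have := geom_dvd Q 2 (2 ^ (t - 1))
    rw [← h2t] at this
    have h2 : (∑ i ∈ Finset.range 2, Q ^ i) = 1 + Q := by
      simp [Finset.sum_range_succ]
    rw [h2] at this
    exact this.trans hdvd
  · right
    refine ⟨h, hpos, ?_⟩
    have := geom_dvd Q (2 * h + 1) (2 ^ t)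
    rw [show (2 * h + 1) * 2 ^ t = n + 1 by rw [hns]; ring] at this
    exact this.trans hdvd
end

section
/- In F_2[x], let A = x^a (x+1)^b (x^2+x+1)^{c} with a, b ≥ 1 and c ≥ 1, and suppose σ(A) = A. Then A = x^2(x+1)(x^2+x+1) or A = x(x+1)^2(x^2+x+1). -/
open Polynomial Finset

namespace PerfAux
noncomputable section

local notation "PP" => (X : (ZMod 2)[X])
local notation "QQ" => (X + 1 : (ZMod 2)[X])
local notation "RR" => (X ^ 2 + X + 1 : (ZMod 2)[X])

/- ## Basic primes and non-divisibility facts -/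

lemma assoc_eq {f g : (ZMod 2)[X]} (h : Associated f g) : f = g := by
  obtain ⟨u, rfl⟩ := h
  obtain ⟨r, hr, hCr⟩ := Polynomial.isUnit_iff.mp u.isUnit
  have key : ∀ s : ZMod 2, s ≠ 0 → s = 1 := by decide
  rw [← hCr, key r hr.ne_zero, map_one, mul_one]

lemma Q_eq : (X + 1 : (ZMod 2)[X]) = X - C 1 := by
  rw [map_one, CharTwo.sub_eq_add]

lemma prime_Q : Prime QQ := by
  rw [Q_eq]; exact prime_X_sub_C 1

lemma R_natDegree : Polynomial.natDegree RR = 2 := by compute_degree!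

lemma R_ne_zero : RR ≠ 0 := by
  intro h; have := congrArg Polynomial.natDegree h; rw [R_natDegree] at this; simp at this

lemma irreducible_R : Irreducible RR := by
  rw [irreducible_iff_roots_eq_zero_of_degree_le_three (by rw [R_natDegree]) (by rw [R_natDegree]; omega)]
  rw [Multiset.eq_zero_iff_forall_notMem]
  intro r hr
  rw [mem_roots R_ne_zero] at hr
  have h2 := hr
  fin_cases r <;> simp [IsRoot] at h2
  · change eval (0 : ZMod 2) RR = 0 at h2; simp at h2
  · change eval (1 : ZMod 2) RR = 0 at h2; simp at h2; exact absurd h2 (by decide)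

lemma prime_R : Prime RR :=
  (UniqueFactorizationMonoid.irreducible_iff_prime).mp irreducible_R

lemma X_dvd_iff' {f : (ZMod 2)[X]} : PP ∣ f ↔ f.eval 0 = 0 := by
  rw [X_dvd_iff, ← coeff_zero_eq_eval_zero]

lemma Q_dvd_iff {f : (ZMod 2)[X]} : QQ ∣ f ↔ f.eval 1 = 0 := by
  rw [Q_eq, dvd_iff_isRoot]; rfl

lemma not_X_dvd_Q : ¬ PP ∣ QQ := by rw [X_dvd_iff']; simp

lemma not_X_dvd_R : ¬ PP ∣ RR := by rw [X_dvd_iff']; simp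

lemma not_Q_dvd_X : ¬ QQ ∣ PP := by rw [Q_dvd_iff]; simp

lemma not_Q_dvd_R : ¬ QQ ∣ RR := by rw [Q_dvd_iff]; simp; decide

lemma not_R_dvd_of_natDegree_lt {f : (ZMod 2)[X]} (hf : f ≠ 0) (h : f.natDegree < 2) :
    ¬ RR ∣ f := by
  intro ⟨g, hg⟩
  have hg0 : g ≠ 0 := by rintro rfl; simp at hg; exact hf hg
  have := natDegree_mul (p := RR) R_ne_zero hg0
  rw [← hg, R_natDegree] at this
  omega

lemma not_R_dvd_X : ¬ RR ∣ PP :=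
  not_R_dvd_of_natDegree_lt X_ne_zero (by simp)

lemma not_R_dvd_Q : ¬ RR ∣ QQ := by
  apply not_R_dvd_of_natDegree_lt
  · intro h; have := congrArg (Polynomial.eval 0) h; simp at this
  · rw [Q_eq, natDegree_X_sub_C]; omega

/- ## char-2 identities -/

lemma two_eq_zero' : (2 : (ZMod 2)[X]) = 0 := CharTwo.two_eq_zero

lemma X3 : PP ^ 3 + 1 = QQ * RR := by linear_combination (-(X^2+X) : (ZMod 2)[X]) * two_eq_zero'
lemma Q3 : QQ ^ 3 + 1 = PP * RR := by linear_combination (X^2+X+1 : (ZMod 2)[X]) * two_eq_zero'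
lemma R_add_one : RR + 1 = PP * QQ := by linear_combination two_eq_zero'
lemma Q_add_one : QQ + 1 = PP := by linear_combination two_eq_zero'
lemma one_add_one' : (1 : (ZMod 2)[X]) + 1 = 0 := by linear_combination two_eq_zero'

/- ## geometric sums and multiplicity lemmas -/

lemma odd_cast_eq_one {m : ℕ} (hm : Odd m) : (m : (ZMod 2)[X]) = 1 := by
  obtain ⟨t, rfl⟩ := hm
  push_cast
  simp [two_eq_zero']

lemma geom_char2 (f : (ZMod 2)[X]) (m : ℕ) :
    (∑ i ∈ Finset.range m, f ^ i) * (f + 1) = f ^ m + 1 := by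
  have := geom_sum_mul f m
  rwa [CharTwo.sub_eq_add, CharTwo.sub_eq_add] at this

lemma dvd_pow_add_one {p f : (ZMod 2)[X]} (hp1 : p ∣ f + 1) (i : ℕ) : p ∣ f ^ i + 1 := by
  refine hp1.trans ?_
  have := sub_dvd_pow_sub_pow f 1 i
  rwa [CharTwo.sub_eq_add, CharTwo.sub_eq_add, one_pow] at this

lemma not_dvd_geom {p f : (ZMod 2)[X]} (hp : Prime p) (hp1 : p ∣ f + 1) {m : ℕ} (hm : Odd m) :
    ¬ p ∣ ∑ i ∈ Finset.range m, f ^ i := by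
  intro hd
  have h1 : p ∣ (∑ i ∈ Finset.range m, f ^ i) + 1 := by
    have he : (∑ i ∈ Finset.range m, f ^ i) + 1 = ∑ i ∈ Finset.range m, (f ^ i + 1) := by
      rw [Finset.sum_add_distrib, Finset.sum_const, Finset.card_range, nsmul_eq_mul, mul_one,
        odd_cast_eq_one hm]
    rw [he]
    exact Finset.dvd_sum fun i _ => dvd_pow_add_one hp1 i
  have : p ∣ 1 := (dvd_add_right hd).mp h1
  exact hp.not_unit (isUnit_of_dvd_one this)

lemma emult_pow_add_one {p f : (ZMod 2)[X]} (hp : Prime p) (hp1 : p ∣ f + 1)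
    {k m : ℕ} (hm : Odd m) :
    emultiplicity p (f ^ (2 ^ k * m) + 1) = ((2 ^ k : ℕ) : ℕ∞) * emultiplicity p (f + 1) := by
  have h2 : f ^ (2 ^ k * m) + 1 = ((∑ i ∈ Finset.range m, f ^ i) * (f + 1)) ^ 2 ^ k := by
    rw [geom_char2, add_pow_char_pow, one_pow, mul_comm (2^k) m, pow_mul]
  rw [h2, emultiplicity_pow hp, emultiplicity_mul hp,
    emultiplicity_eq_zero.mpr (not_dvd_geom hp hp1 hm), zero_add]

/- ## monicity, canonical forms -/

lemma monic_Q : (QQ).Monic := by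
  rw [Q_eq]; exact monic_X_sub_C 1

lemma monic_R : (RR).Monic := by
  have h : degree (X + 1 : (ZMod 2)[X]) < 2 := by
    apply lt_of_le_of_lt (degree_add_le _ _)
    simp [degree_X, degree_one]
  have := monic_X_pow_add (p := (X + 1 : (ZMod 2)[X])) (n := 2) h
  rw [← add_assoc] at this
  exact this

lemma emult_self {p : (ZMod 2)[X]} (hp : Prime p) : emultiplicity p p = 1 := by
  simpa using emultiplicity_pow_self_of_prime hp 1

lemma emult_zero_of_not_dvd {p q : (ZMod 2)[X]} (h : ¬ p ∣ q) : emultiplicity p q = 0 :=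
  emultiplicity_eq_zero.mpr h

lemma emult_canon {p : (ZMod 2)[X]} (hp : Prime p) {q r : (ZMod 2)[X]}
    (hq : ¬ p ∣ q) (hr : ¬ p ∣ r) (i j k : ℕ) :
    emultiplicity p (p ^ i * q ^ j * r ^ k) = (i : ℕ∞) := by
  rw [emultiplicity_mul hp, emultiplicity_mul hp, emultiplicity_pow hp, emultiplicity_pow hp,
    emultiplicity_pow hp, emult_self hp, emult_zero_of_not_dvd hq, emult_zero_of_not_dvd hr]
  simp

lemma emult_X_canon (i j k : ℕ) : emultiplicity PP (PP ^ i * QQ ^ j * RR ^ k) = (i : ℕ∞) :=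
  emult_canon prime_X not_X_dvd_Q not_X_dvd_R i j k

lemma emult_Q_canon (i j k : ℕ) : emultiplicity QQ (PP ^ i * QQ ^ j * RR ^ k) = (j : ℕ∞) := by
  have := emult_canon prime_Q not_Q_dvd_X not_Q_dvd_R j i k
  rw [show QQ ^ j * PP ^ i * RR ^ k = PP ^ i * QQ ^ j * RR ^ k by ring] at this
  exact this

lemma emult_R_canon (i j k : ℕ) : emultiplicity RR (PP ^ i * QQ ^ j * RR ^ k) = (k : ℕ∞) := by
  have := emult_canon prime_R not_R_dvd_X not_R_dvd_Q k i j
  rw [show RR ^ k * PP ^ i * QQ ^ j = PP ^ i * QQ ^ j * RR ^ k by ring] at this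
  exact this

lemma inj3 {i j k i' j' k' : ℕ}
    (h : PP ^ i * QQ ^ j * RR ^ k = PP ^ i' * QQ ^ j' * RR ^ k') :
    i = i' ∧ j = j' ∧ k = k' := by
  refine ⟨?_, ?_, ?_⟩
  · have := (emult_X_canon i j k).symm.trans (h ▸ emult_X_canon i' j' k')
    exact_mod_cast this
  · have := (emult_Q_canon i j k).symm.trans (h ▸ emult_Q_canon i' j' k')
    exact_mod_cast this
  · have := (emult_R_canon i j k).symm.trans (h ▸ emult_R_canon i' j' k')
    exact_mod_cast this

lemma divisor_form {g : (ZMod 2)[X]} {i j k : ℕ} (h : g ∣ PP ^ i * QQ ^ j * RR ^ k) :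
    ∃ i' ≤ i, ∃ j' ≤ j, ∃ k' ≤ k, g = PP ^ i' * QQ ^ j' * RR ^ k' := by
  obtain ⟨d12, d3, h12, h3, rfl⟩ := exists_dvd_and_dvd_of_dvd_mul h
  obtain ⟨d1, d2, h1, h2, rfl⟩ := exists_dvd_and_dvd_of_dvd_mul h12
  obtain ⟨i', hi, ha1⟩ := (dvd_prime_pow prime_X i).mp h1
  obtain ⟨j', hj, ha2⟩ := (dvd_prime_pow prime_Q j).mp h2
  obtain ⟨k', hk, ha3⟩ := (dvd_prime_pow prime_R k).mp h3
  exact ⟨i', hi, j', hj, k', hk, by rw [assoc_eq ha1, assoc_eq ha2, assoc_eq ha3]⟩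

lemma natDegree_pow_add_one {f : (ZMod 2)[X]} (hf : f.Monic) (n : ℕ) :
    (f ^ n + 1).natDegree = n * f.natDegree := by
  have h : f ^ n + 1 = f ^ n + C 1 := by rw [map_one]
  rw [h, natDegree_add_C, hf.natDegree_pow]

lemma natDegree_canon (i j k : ℕ) :
    (PP ^ i * QQ ^ j * RR ^ k).natDegree = i + j + 2 * k := by
  rw [Monic.natDegree_mul ((monic_X_pow i).mul (monic_Q.pow j)) (monic_R.pow k),
    Monic.natDegree_mul (monic_X_pow i) (monic_Q.pow j),
    monic_Q.natDegree_pow, monic_R.natDegree_pow, natDegree_X_pow, R_natDegree]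
  have h1 : (QQ).natDegree = 1 := by rw [Q_eq, natDegree_X_sub_C]
  rw [h1]
  ring

/- ## R-divisibility of f^m + 1 -/

lemma not_R_dvd_X_add_one : ¬ RR ∣ PP + 1 := not_R_dvd_Q

lemma not_R_dvd_X_sq_add_one : ¬ RR ∣ PP ^ 2 + 1 := by
  intro h
  have he : PP ^ 2 + 1 = QQ * QQ := by linear_combination (-X : (ZMod 2)[X]) * two_eq_zero'
  rw [he] at h
  rcases (prime_R.2.2 _ _ h) with h' | h' <;> exact not_R_dvd_Q h'

lemma not_R_dvd_Q_add_one : ¬ RR ∣ QQ + 1 := by rw [Q_add_one]; exact not_R_dvd_X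

lemma not_R_dvd_Q_sq_add_one : ¬ RR ∣ QQ ^ 2 + 1 := by
  intro h
  have he : QQ ^ 2 + 1 = PP * PP := by linear_combination (X+1 : (ZMod 2)[X]) * two_eq_zero'
  rw [he] at h
  rcases (prime_R.2.2 _ _ h) with h' | h' <;> exact not_R_dvd_X h'

lemma R_dvd_iff {f : (ZMod 2)[X]} (h3 : RR ∣ f ^ 3 + 1) (h1 : ¬ RR ∣ f + 1)
    (h2 : ¬ RR ∣ f ^ 2 + 1) (m : ℕ) : RR ∣ f ^ m + 1 ↔ 3 ∣ m := by
  have key : ∀ q r : ℕ, (RR ∣ f ^ (3 * q + r) + 1 ↔ RR ∣ f ^ r + 1) := by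
    intro q r
    have hd : RR ∣ f ^ (3 * q) + 1 := by
      rw [pow_mul]; exact dvd_pow_add_one h3 q
    have hsplit : f ^ (3 * q + r) + 1 = (f ^ (3 * q) + 1) * f ^ r + (f ^ r + 1) := by
      rw [pow_add]; linear_combination (-(f ^ r) : (ZMod 2)[X]) * two_eq_zero'
    rw [hsplit]
    exact dvd_add_right (hd.mul_right _)
  constructor
  · intro hdvd
    rw [show m = 3 * (m / 3) + m % 3 from (Nat.div_add_mod m 3).symm] at hdvd
    rw [key] at hdvd
    have hlt : m % 3 < 3 := Nat.mod_lt _ (by norm_num)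
    interval_cases h : m % 3
    · exact Nat.dvd_of_mod_eq_zero h
    · rw [pow_one] at hdvd; exact absurd hdvd h1
    · exact absurd hdvd h2
  · rintro ⟨q, rfl⟩
    rw [show 3 * q = 3 * q + 0 by ring, key, pow_zero, one_add_one']
    exact dvd_zero _

lemma dvd_derivative_of_sq_dvd {p g : (ZMod 2)[X]} (h : p * p ∣ g) : p ∣ derivative g := by
  obtain ⟨h', rfl⟩ := h
  refine ⟨derivative p * h' + derivative p * h' + p * derivative h', ?_⟩
  simp only [derivative_mul]
  ring

lemma emult_R_odd {f : (ZMod 2)[X]} (h3 : RR ∣ f ^ 3 + 1) (h1 : ¬ RR ∣ f + 1)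
    (h2 : ¬ RR ∣ f ^ 2 + 1) (hRf : ¬ RR ∣ f) (hdf : derivative f = 1)
    {m : ℕ} (hm : Odd m) :
    emultiplicity RR (f ^ m + 1) = if 3 ∣ m then 1 else 0 := by
  by_cases hdv : 3 ∣ m
  · rw [if_pos hdv]
    have hm3 : 3 ≤ m := by
      rcases hdv with ⟨q, rfl⟩
      rcases Nat.eq_zero_or_pos q with rfl | hq
      · exact absurd hm (by simp)
      · omega
    rw [show ((1 : ℕ∞)) = ((1 : ℕ) : ℕ∞) by rfl, emultiplicity_eq_coe]
    constructor
    · rw [pow_one]; exact (R_dvd_iff h3 h1 h2 m).mpr hdv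
    · intro hsq
      rw [show (1 + 1) = 2 by rfl, sq] at hsq
      have hder : RR ∣ derivative (f ^ m + 1) := dvd_derivative_of_sq_dvd hsq
      rw [derivative_add, derivative_one, add_zero, derivative_pow, hdf, mul_one] at hder
      have hC : (C ((m : ZMod 2)) : (ZMod 2)[X]) = 1 := by
        obtain ⟨t, ht⟩ := hm
        rw [ht]; push_cast; rw [show ((2 : ZMod 2)) = 0 from rfl]; simp
      rw [hC, one_mul] at hder
      exact hRf (prime_R.dvd_of_dvd_pow (n := m - 1) hder)
  · rw [if_neg hdv]
    exact emultiplicity_eq_zero.mpr (fun hd => hdv ((R_dvd_iff h3 h1 h2 m).mp hd))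

lemma pow2_add_one (f : (ZMod 2)[X]) (k : ℕ) : f ^ 2 ^ k + 1 = (f + 1) ^ 2 ^ k := by
  rw [add_pow_char_pow, one_pow]

lemma emult_R_factor {f : (ZMod 2)[X]} (h3 : RR ∣ f ^ 3 + 1) (h1 : ¬ RR ∣ f + 1)
    (h2 : ¬ RR ∣ f ^ 2 + 1) (hRf : ¬ RR ∣ f) (hdf : derivative f = 1)
    {k m : ℕ} (hm : Odd m) :
    emultiplicity RR (f ^ (2 ^ k * m) + 1) =
      ((2 ^ k : ℕ) : ℕ∞) * (if 3 ∣ m then 1 else 0) := by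
  rw [mul_comm (2 ^ k) m, pow_mul, pow2_add_one, emultiplicity_pow prime_R,
    emult_R_odd h3 h1 h2 hRf hdf hm]

/- ## sigma computation -/

lemma sigma_eq (a b c : ℕ) :
    sigmaF2 (PP ^ a * QQ ^ b * RR ^ c) =
      (∑ i ∈ range (a + 1), PP ^ i) * (∑ j ∈ range (b + 1), QQ ^ j)
        * (∑ k ∈ range (c + 1), RR ^ k) := by
  classical
  set F : ℕ × ℕ × ℕ → (ZMod 2)[X] := fun t => PP ^ t.1 * QQ ^ t.2.1 * RR ^ t.2.2 with hF
  set box : Finset (ℕ × ℕ × ℕ) := range (a + 1) ×ˢ range (b + 1) ×ˢ range (c + 1) with hbox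
  have hset : {d : (ZMod 2)[X] | d.Monic ∧ d ∣ PP ^ a * QQ ^ b * RR ^ c}
      = ↑(box.image F) := by
    ext d
    simp only [Set.mem_setOf_eq, coe_image, Set.mem_image, mem_coe, hbox, Finset.mem_product,
      Finset.mem_range]
    constructor
    · rintro ⟨hmon, hdvd⟩
      obtain ⟨i', hi, j', hj, k', hk, rfl⟩ := divisor_form hdvd
      exact ⟨⟨i', j', k'⟩, ⟨Nat.lt_succ_of_le hi, Nat.lt_succ_of_le hj, Nat.lt_succ_of_le hk⟩, rfl⟩
    · rintro ⟨⟨i, j, k⟩, ⟨hi, hj, hk⟩, rfl⟩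
      refine ⟨((monic_X_pow i).mul (monic_Q.pow j)).mul (monic_R.pow k), ?_⟩
      exact mul_dvd_mul (mul_dvd_mul (pow_dvd_pow _ (by omega)) (pow_dvd_pow _ (by omega)))
        (pow_dvd_pow _ (by omega))
  rw [sigmaF2, hset, finsum_mem_coe_finset, Finset.sum_image ?inj]
  case inj =>
    rintro ⟨i, j, k⟩ _ ⟨i', j', k'⟩ _ hEq
    obtain ⟨h1, h2, h3⟩ := inj3 hEq
    exact Prod.ext h1 (Prod.ext h2 h3)
  rw [hbox]
  simp_rw [Finset.sum_product]
  rw [Finset.sum_mul_sum, Finset.sum_mul_sum]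
  refine Finset.sum_congr rfl fun i _ => ?_
  rw [Finset.sum_comm]
  simp_rw [Finset.sum_mul]
  rfl

/- ## endgame arithmetic -/

lemma pow2_cases (n : ℕ) : 2 ^ n = 1 ∨ 2 ∣ 2 ^ n := by
  rcases Nat.eq_zero_or_pos n with rfl | h
  · left; rfl
  · right; exact dvd_pow_self 2 (by omega)

lemma endgame {α β γ du dv a b c : ℕ}
    (hdu : du ≤ 1) (hdv : dv ≤ 1)
    (hA : a + 1 = 2 ^ α * (1 + 2 * du)) (hB : b + 1 = 2 ^ β * (1 + 2 * dv))
    (hC : c + 1 = 2 ^ γ)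
    (hE1 : 2 ^ β + 2 ^ γ = a + 2) (hE2 : 2 ^ α + 2 ^ γ = b + 2)
    (hE3 : 2 ^ α * du + 2 ^ β * dv = c) (hc : 1 ≤ c) :
    (a = 2 ∧ b = 1 ∧ c = 1) ∨ (a = 1 ∧ b = 2 ∧ c = 1) := by
  have pa := pow2_cases α
  have pb := pow2_cases β
  have pc := pow2_cases γ
  have ha1 : 1 ≤ 2 ^ α := Nat.one_le_two_pow
  have hb1 : 1 ≤ 2 ^ β := Nat.one_le_two_pow
  have hc1 : 1 ≤ 2 ^ γ := Nat.one_le_two_pow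
  interval_cases du <;> interval_cases dv <;>
    rcases pa with pa | pa <;> rcases pb with pb | pb <;> rcases pc with pc | pc <;> omega

/- ## analysis of the three factors -/

lemma cast_if_mul (n : ℕ) (P' : Prop) [Decidable P'] :
    ((n : ℕ∞) * (if P' then (1:ℕ∞) else 0)) = ((n * (if P' then 1 else 0) : ℕ) : ℕ∞) := by
  split <;> simp

/-- Analysis of `X^(a+1) + 1` as a divisor of the RHS. -/
lemma factor1 {a α u : ℕ} (hau : a + 1 = 2 ^ α * u) (hu : Odd u)
    {N M L : ℕ} (hdvd : (PP ^ (a + 1) + 1) ∣ PP ^ N * QQ ^ M * RR ^ L) :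
    ∃ du ≤ 1, u = 1 + 2 * du ∧ PP ^ (a + 1) + 1 = QQ ^ (2 ^ α) * RR ^ (2 ^ α * du) := by
  obtain ⟨i, hi, j, hj, k, hk, hform⟩ := divisor_form hdvd
  -- emultiplicities of the factor
  have e1 : emultiplicity PP (PP ^ (a + 1) + 1) = (0 : ℕ∞) := by
    apply emult_zero_of_not_dvd
    rw [X_dvd_iff']
    simp [zero_pow (by omega : a + 1 ≠ 0)]
  have e2 : emultiplicity QQ (PP ^ (a + 1) + 1) = ((2 ^ α : ℕ) : ℕ∞) := by
    rw [hau, emult_pow_add_one prime_Q dvd_rfl hu, emult_self prime_Q, mul_one]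
  have e3 : emultiplicity RR (PP ^ (a + 1) + 1)
      = ((2 ^ α * (if 3 ∣ u then 1 else 0) : ℕ) : ℕ∞) := by
    rw [hau, emult_R_factor (show RR ∣ PP ^ 3 + 1 by rw [X3]; exact Dvd.intro_left _ rfl)
      not_R_dvd_X_add_one not_R_dvd_X_sq_add_one not_R_dvd_X derivative_X hu, cast_if_mul]
  rw [hform] at e1 e2 e3
  rw [emult_X_canon] at e1
  rw [emult_Q_canon] at e2
  rw [emult_R_canon] at e3
  have hi0 : i = 0 := by exact_mod_cast e1
  have hj0 : j = 2 ^ α := by exact_mod_cast e2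
  have hk0 : k = 2 ^ α * (if 3 ∣ u then 1 else 0) := by exact_mod_cast e3
  -- degree computation
  have hdeg : (PP ^ (a + 1) + 1).natDegree = a + 1 := by
    rw [natDegree_pow_add_one monic_X, natDegree_X, mul_one]
  rw [hform, natDegree_canon, hi0, hj0, hk0] at hdeg
  refine ⟨if 3 ∣ u then 1 else 0, by split <;> omega, ?_, ?_⟩
  · -- u = 1 + 2 * du
    refine Nat.eq_of_mul_eq_mul_left (show 0 < 2 ^ α from Nat.pow_pos (by omega)) ?_
    calc 2 ^ α * u = a + 1 := hau.symm
      _ = 0 + 2 ^ α + 2 * (2 ^ α * (if 3 ∣ u then 1 else 0)) := hdeg.symm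
      _ = 2 ^ α * (1 + 2 * (if 3 ∣ u then 1 else 0)) := by ring
  · rw [hform, hi0, hj0, hk0, pow_zero, one_mul]

/-- Analysis of `(X+1)^(b+1) + 1`. -/
lemma factor2 {b β v : ℕ} (hbv : b + 1 = 2 ^ β * v) (hv : Odd v)
    {N M L : ℕ} (hdvd : (QQ ^ (b + 1) + 1) ∣ PP ^ N * QQ ^ M * RR ^ L) :
    ∃ dv ≤ 1, v = 1 + 2 * dv ∧ QQ ^ (b + 1) + 1 = PP ^ (2 ^ β) * RR ^ (2 ^ β * dv) := by
  obtain ⟨i, hi, j, hj, k, hk, hform⟩ := divisor_form hdvd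
  have e1 : emultiplicity QQ (QQ ^ (b + 1) + 1) = (0 : ℕ∞) := by
    apply emult_zero_of_not_dvd
    rw [Q_dvd_iff]
    simp only [eval_add, eval_pow, eval_X, eval_one]
    rw [show ((1:ZMod 2) + 1) = 0 from rfl, zero_pow (by omega : b + 1 ≠ 0)]
    simp
  have e2 : emultiplicity PP (QQ ^ (b + 1) + 1) = ((2 ^ β : ℕ) : ℕ∞) := by
    rw [hbv, emult_pow_add_one prime_X (show PP ∣ QQ + 1 by rw [Q_add_one]) hv, Q_add_one,
      emult_self prime_X, mul_one]
  have e3 : emultiplicity RR (QQ ^ (b + 1) + 1)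
      = ((2 ^ β * (if 3 ∣ v then 1 else 0) : ℕ) : ℕ∞) := by
    rw [hbv, emult_R_factor (show RR ∣ QQ ^ 3 + 1 by rw [Q3]; exact Dvd.intro_left _ rfl)
      not_R_dvd_Q_add_one not_R_dvd_Q_sq_add_one not_R_dvd_Q (by simp) hv, cast_if_mul]
  rw [hform] at e1 e2 e3
  rw [emult_Q_canon] at e1
  rw [emult_X_canon] at e2
  rw [emult_R_canon] at e3
  have hj0 : j = 0 := by exact_mod_cast e1
  have hi0 : i = 2 ^ β := by exact_mod_cast e2
  have hk0 : k = 2 ^ β * (if 3 ∣ v then 1 else 0) := by exact_mod_cast e3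
  have hdeg : (QQ ^ (b + 1) + 1).natDegree = b + 1 := by
    rw [natDegree_pow_add_one monic_Q]
    have h1 : (QQ).natDegree = 1 := by rw [Q_eq, natDegree_X_sub_C]
    rw [h1, mul_one]
  rw [hform, natDegree_canon, hi0, hj0, hk0] at hdeg
  refine ⟨if 3 ∣ v then 1 else 0, by split <;> omega, ?_, ?_⟩
  · refine Nat.eq_of_mul_eq_mul_left (show 0 < 2 ^ β from Nat.pow_pos (by omega)) ?_
    calc 2 ^ β * v = b + 1 := hbv.symm
      _ = 2 ^ β + 0 + 2 * (2 ^ β * (if 3 ∣ v then 1 else 0)) := hdeg.symm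
      _ = 2 ^ β * (1 + 2 * (if 3 ∣ v then 1 else 0)) := by ring
  · rw [hform, hi0, hj0, hk0, pow_zero, mul_one]

/-- Analysis of `R^(c+1) + 1`. -/
lemma factor3 {c γ w : ℕ} (hcw : c + 1 = 2 ^ γ * w) (hw : Odd w)
    {N M L : ℕ} (hdvd : (RR ^ (c + 1) + 1) ∣ PP ^ N * QQ ^ M * RR ^ L) :
    c + 1 = 2 ^ γ ∧ RR ^ (c + 1) + 1 = PP ^ (2 ^ γ) * QQ ^ (2 ^ γ) := by
  obtain ⟨i, hi, j, hj, k, hk, hform⟩ := divisor_form hdvd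
  have e1 : emultiplicity PP (RR ^ (c + 1) + 1) = ((2 ^ γ : ℕ) : ℕ∞) := by
    have hXR : PP ∣ RR + 1 := by rw [R_add_one]; exact Dvd.intro _ rfl
    rw [hcw, emult_pow_add_one prime_X hXR hw, R_add_one, emultiplicity_mul prime_X,
      emult_self prime_X, emult_zero_of_not_dvd not_X_dvd_Q, add_zero, mul_one]
  have e2 : emultiplicity QQ (RR ^ (c + 1) + 1) = ((2 ^ γ : ℕ) : ℕ∞) := by
    have hQR : QQ ∣ RR + 1 := by rw [R_add_one]; exact Dvd.intro_left _ rfl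
    rw [hcw, emult_pow_add_one prime_Q hQR hw, R_add_one, emultiplicity_mul prime_Q,
      emult_self prime_Q, emult_zero_of_not_dvd not_Q_dvd_X, zero_add, mul_one]
  have e3 : emultiplicity RR (RR ^ (c + 1) + 1) = (0 : ℕ∞) := by
    apply emult_zero_of_not_dvd
    intro h
    have : RR ∣ 1 := (dvd_add_right (dvd_pow_self RR (by omega : c + 1 ≠ 0))).mp h
    exact prime_R.not_unit (isUnit_of_dvd_one this)
  rw [hform] at e1 e2 e3
  rw [emult_X_canon] at e1
  rw [emult_Q_canon] at e2
  rw [emult_R_canon] at e3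
  have hi0 : i = 2 ^ γ := by exact_mod_cast e1
  have hj0 : j = 2 ^ γ := by exact_mod_cast e2
  have hk0 : k = 0 := by exact_mod_cast e3
  have hdeg : (RR ^ (c + 1) + 1).natDegree = (c + 1) * 2 := by
    rw [natDegree_pow_add_one monic_R, R_natDegree]
  rw [hform, natDegree_canon, hi0, hj0, hk0] at hdeg
  constructor
  · omega
  · rw [hform, hi0, hj0, hk0, pow_zero, mul_one]

end
end PerfAux

open PerfAux in
theorem perfect_with_m1_factor (a b c : ℕ) (ha : 1 ≤ a) (hb : 1 ≤ b) (hc : 1 ≤ c)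
    (A : Polynomial (ZMod 2))
    (hA : A = X ^ a * (X + 1) ^ b * (X ^ 2 + X + 1) ^ c)
    (hperf : sigmaF2 A = A) :
    A = X ^ 2 * (X + 1) * (X ^ 2 + X + 1) ∨ A = X * (X + 1) ^ 2 * (X ^ 2 + X + 1) := by
  subst hA
  rw [sigma_eq] at hperf
  -- the main equation
  have hE : ((X : (ZMod 2)[X]) ^ (a + 1) + 1) * ((X + 1) ^ (b + 1) + 1)
      * ((X ^ 2 + X + 1) ^ (c + 1) + 1)
      = X ^ (a + 2) * (X + 1) ^ (b + 2) * (X ^ 2 + X + 1) ^ c := by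
    have h1 := geom_char2 (X : (ZMod 2)[X]) (a + 1)
    have h2 := geom_char2 ((X : (ZMod 2)[X]) + 1) (b + 1)
    have h3 := geom_char2 ((X : (ZMod 2)[X]) ^ 2 + X + 1) (c + 1)
    rw [Q_add_one] at h2
    rw [R_add_one] at h3
    calc ((X : (ZMod 2)[X]) ^ (a + 1) + 1) * ((X + 1) ^ (b + 1) + 1)
          * ((X ^ 2 + X + 1) ^ (c + 1) + 1)
        = ((∑ i ∈ Finset.range (a + 1), (X : (ZMod 2)[X]) ^ i)
            * (∑ j ∈ Finset.range (b + 1), ((X : (ZMod 2)[X]) + 1) ^ j)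
            * (∑ k ∈ Finset.range (c + 1), ((X : (ZMod 2)[X]) ^ 2 + X + 1) ^ k))
            * ((X + 1) * X * (X * (X + 1))) := by
          rw [← h1, ← h2, ← h3]; ring
      _ = (X ^ a * (X + 1) ^ b * (X ^ 2 + X + 1) ^ c) * ((X + 1) * X * (X * (X + 1))) := by
          rw [hperf]
      _ = X ^ (a + 2) * (X + 1) ^ (b + 2) * (X ^ 2 + X + 1) ^ c := by ring
  -- 2-adic decompositions of a+1, b+1, c+1
  obtain ⟨α, u, hu2, hau⟩ := Nat.exists_eq_pow_mul_and_not_dvd (show a + 1 ≠ 0 by omega) 2 (by omega)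
  obtain ⟨β, v, hv2, hbv⟩ := Nat.exists_eq_pow_mul_and_not_dvd (show b + 1 ≠ 0 by omega) 2 (by omega)
  obtain ⟨γ, w, hw2, hcw⟩ := Nat.exists_eq_pow_mul_and_not_dvd (show c + 1 ≠ 0 by omega) 2 (by omega)
  have hu : Odd u := Nat.odd_iff.mpr (by omega)
  have hv : Odd v := Nat.odd_iff.mpr (by omega)
  have hw : Odd w := Nat.odd_iff.mpr (by omega)
  -- each factor divides the RHS
  have hd1 : ((X : (ZMod 2)[X]) ^ (a + 1) + 1)
      ∣ X ^ (a + 2) * (X + 1) ^ (b + 2) * (X ^ 2 + X + 1) ^ c := by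
    rw [← hE]; exact dvd_mul_of_dvd_left (dvd_mul_right _ _) _
  have hd2 : (((X : (ZMod 2)[X]) + 1) ^ (b + 1) + 1)
      ∣ X ^ (a + 2) * (X + 1) ^ (b + 2) * (X ^ 2 + X + 1) ^ c := by
    rw [← hE]; exact dvd_mul_of_dvd_left (dvd_mul_left _ _) _
  have hd3 : (((X : (ZMod 2)[X]) ^ 2 + X + 1) ^ (c + 1) + 1)
      ∣ X ^ (a + 2) * (X + 1) ^ (b + 2) * (X ^ 2 + X + 1) ^ c := by
    rw [← hE]; exact dvd_mul_left _ _
  obtain ⟨du, hdu, hu1, hf1⟩ := factor1 hau hu hd1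
  obtain ⟨dv, hdv, hv1, hf2⟩ := factor2 hbv hv hd2
  obtain ⟨hC, hf3⟩ := factor3 hcw hw hd3
  -- rewrite the main equation in canonical form
  have hE' : (X : (ZMod 2)[X]) ^ (2 ^ β + 2 ^ γ) * (X + 1) ^ (2 ^ α + 2 ^ γ)
      * (X ^ 2 + X + 1) ^ (2 ^ α * du + 2 ^ β * dv)
      = X ^ (a + 2) * (X + 1) ^ (b + 2) * (X ^ 2 + X + 1) ^ c := by
    calc (X : (ZMod 2)[X]) ^ (2 ^ β + 2 ^ γ) * (X + 1) ^ (2 ^ α + 2 ^ γ)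
          * (X ^ 2 + X + 1) ^ (2 ^ α * du + 2 ^ β * dv)
        = ((X + 1) ^ (2 ^ α) * (X ^ 2 + X + 1) ^ (2 ^ α * du))
            * ((X : (ZMod 2)[X]) ^ (2 ^ β) * (X ^ 2 + X + 1) ^ (2 ^ β * dv))
            * ((X : (ZMod 2)[X]) ^ (2 ^ γ) * (X + 1) ^ (2 ^ γ)) := by
          rw [pow_add, pow_add, pow_add]; ring
      _ = X ^ (a + 2) * (X + 1) ^ (b + 2) * (X ^ 2 + X + 1) ^ c := by
          rw [← hf1, ← hf2, ← hf3]; exact hE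
  obtain ⟨hq1, hq2, hq3⟩ := inj3 hE'
  -- arithmetic endgame
  rcases endgame hdu hdv (hu1 ▸ hau) (hv1 ▸ hbv) hC hq1 hq2 hq3 hc with
    ⟨ra, rb, rc⟩ | ⟨ra, rb, rc⟩
  · left; rw [ra, rb, rc, pow_one, pow_one]
  · right; rw [ra, rb, rc, pow_one, pow_one]
end
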